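/- arXiv:1507.07792 — 8 statements merged into one kernel-verified Lean document; each statement's English description precedes it below -/
import Mathlib

section
/- Let, for each N ≥ 1, X_{1,N}, …, X_{J(N),N} be independent integer (ℤ)-valued square-integrable random variables with sums S_N, means a_N = E(S_N) and variances b_N² = Var(S_N). Assume: (1) lim_{N→∞} b_N = +∞; (2) there exists a sequence (A_N) of positive reals converging to infinity such that lim_{N→∞} sup_{|t| ≤ A_N} | E(exp(i t (S_N − a_N)/b_N)) − exp(−t²/2) | = 0; (3) there exists an integrable function φ ∈ L¹(ℝ) such that for all N ≥ 1 and all t ∈ [−π, π], | E(exp(i t S_N)) | ≤ φ(b_N t). Then lim_{N→∞} sup_{k∈ℤ} [ b_N √(2π) P(S_N = k) − exp(−(k − a_N)²/(2 b_N²)) ] = 0. -/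
open MeasureTheory Filter Set
open scoped Real

noncomputable section

lemma LLT_int_exp_int (m : ℤ) :
    (∫ t in (-π : ℝ)..π, Complex.exp (Complex.I * t * m)) = if m = 0 then 2*π else 0 := by
  by_cases hm : m = 0
  · simp [hm, two_mul]
  · rw [if_neg hm]
    have h1 : ∀ t : ℝ, Complex.I * t * m = (Complex.I * m) * t := by intro t; ring
    simp_rw [h1]
    have hc : Complex.I * m ≠ 0 := by
      simp [Complex.I_ne_zero, Complex.ext_iff, hm]
    rw [integral_exp_mul_complex hc]
    have hz : Complex.exp (Complex.I * m * π) = (-1 : ℂ) ^ m := by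
      rw [show Complex.I * m * π = m * (π * Complex.I) by push_cast; ring,
        Complex.exp_int_mul, Complex.exp_pi_mul_I]
    have hz' : Complex.exp (Complex.I * m * (-π : ℝ)) = (-1 : ℂ) ^ (-m) := by
      rw [show Complex.I * m * ((-π : ℝ) : ℂ) = ((-m : ℤ) : ℂ) * (π * Complex.I) by push_cast; ring,
        Complex.exp_int_mul, Complex.exp_pi_mul_I]
    have hpm : ((-1 : ℂ)) ^ (-m) = (-1 : ℂ) ^ m := by
      rcases Int.even_or_odd m with he | ho
      · rw [he.neg_one_zpow, (he.neg).neg_one_zpow]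
      · rw [ho.neg_one_zpow, (ho.neg).neg_one_zpow]
    rw [hz, hz', hpm, sub_self, zero_div]
    simp

end

noncomputable section

variable {Ω : Type*} [MeasurableSpace Ω] (μ : Measure Ω) [IsProbabilityMeasure μ]

lemma LLT_meas_aux (S : Ω → ℤ) (hS : Measurable S) (c : ℤ) :
    Measurable (fun p : ℝ × Ω => Complex.exp (Complex.I * p.1 * ((S p.2 - c : ℤ) : ℂ))) := by
  apply Complex.measurable_exp.comp
  apply Measurable.mul
  · exact (Complex.measurable_ofReal.comp measurable_fst).const_mul _
  · exact (measurable_from_top (f := (fun m : ℤ => ((m : ℂ))))).comp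
      ((hS.comp measurable_snd).sub measurable_const)

lemma LLT_norm_exp (t : ℝ) (m : ℤ) : ‖Complex.exp (Complex.I * t * (m : ℂ))‖ = 1 := by
  rw [Complex.norm_exp]
  simp [Complex.mul_re, Complex.mul_im]

lemma LLT_inversion (S : Ω → ℤ) (hS : Measurable S) (k : ℤ) :
    (∫ t in Set.Ioc (-π : ℝ) π,
        Complex.exp (-Complex.I * t * k) * (∫ ω, Complex.exp (Complex.I * t * (S ω : ℂ)) ∂μ))
      = 2*π * (μ {ω | S ω = k}).toReal := by
  have hmeasset : MeasurableSet {ω | S ω = k} := hS (measurableSet_singleton k)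
  have h1 : ∀ t : ℝ, Complex.exp (-Complex.I * t * k) * (∫ ω, Complex.exp (Complex.I * t * (S ω : ℂ)) ∂μ)
      = ∫ ω, Complex.exp (Complex.I * t * ((S ω - k : ℤ) : ℂ)) ∂μ := by
    intro t
    rw [← integral_const_mul]
    congr 1; ext ω
    rw [← Complex.exp_add]
    congr 1
    push_cast
    ring
  simp_rw [h1]
  have hfin : IsFiniteMeasure (volume.restrict (Set.Ioc (-π : ℝ) π)) := by
    constructor
    rw [Measure.restrict_apply_univ]
    exact measure_Ioc_lt_top
  have hint : Integrable (Function.uncurry fun (t : ℝ) (ω : Ω) =>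
      Complex.exp (Complex.I * t * ((S ω - k : ℤ) : ℂ)))
      ((volume.restrict (Set.Ioc (-π : ℝ) π)).prod μ) := by
    apply (integrable_const (1 : ℝ)).mono'
    · exact (LLT_meas_aux S hS k).aestronglyMeasurable
    · refine Filter.Eventually.of_forall fun p => ?_
      rw [Function.uncurry]
      exact le_of_eq (LLT_norm_exp p.1 _)
  rw [integral_integral_swap hint]
  have h2 : ∀ ω, (∫ t in Set.Ioc (-π : ℝ) π, Complex.exp (Complex.I * t * ((S ω - k : ℤ) : ℂ)))
      = Set.indicator {ω | S ω = k} (fun _ => (2*π : ℂ)) ω := by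
    intro ω
    rw [← intervalIntegral.integral_of_le (by linarith [Real.pi_pos] : (-π:ℝ) ≤ π),
      LLT_int_exp_int]
    by_cases h : S ω = k
    · rw [if_pos (by simp [h]), Set.indicator_of_mem (by exact h)]; push_cast; ring
    · rw [if_neg (by simpa [sub_eq_zero] using h), Set.indicator_of_notMem (by exact h)]; simp
  simp_rw [h2]
  rw [integral_indicator hmeasset, setIntegral_const]
  simp [mul_comm]
  rfl

end

noncomputable section
open Complex in
lemma LLT_gauss (x : ℝ) :
    (∫ u : ℝ, Complex.exp (-Complex.I * u * x) * Complex.exp (-(u:ℂ)^2/2))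
      = (Real.sqrt (2*π) : ℂ) * Real.exp (-x^2/2) := by
  have h := fourierIntegral_gaussian (b := (1/2 : ℂ)) (by norm_num) (-(x:ℂ))
  have h1 : ∀ u : ℝ, Complex.exp (-Complex.I * u * x) * Complex.exp (-(u:ℂ)^2/2)
      = Complex.exp (Complex.I * (-(x:ℂ)) * u) * Complex.exp (-(1/2 : ℂ) * u^2) := by
    intro u; rw [← Complex.exp_add, ← Complex.exp_add]; congr 1; ring
  simp_rw [h1, h]
  have h2 : ((π : ℂ) / (1/2)) = ((2*π : ℝ) : ℂ) := by push_cast; ring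
  have h3 : Real.sqrt (2*π) = (2*π) ^ (1/2 : ℝ) := Real.sqrt_eq_rpow _
  have h4 : Complex.exp (-(-(x:ℂ))^2 / (4 * (1/2))) = ((Real.exp (-x^2/2) : ℝ) : ℂ) := by
    rw [Complex.ofReal_exp]; congr 1; push_cast; ring
  rw [h2, h4, show (1/2 : ℂ) = ((1/2:ℝ) : ℂ) by norm_num,
    ← Complex.ofReal_cpow (by positivity) (1/2 : ℝ), ← h3]

lemma LLT_tail (ψ : ℝ → ℝ) (hψ : Integrable ψ) :
    Tendsto (fun A : ℝ => ∫ u in {u : ℝ | A ≤ |u|}, ψ u) atTop (nhds 0) := by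
  have hms : ∀ A : ℝ, MeasurableSet {u : ℝ | A ≤ |u|} := fun A =>
    (isClosed_le continuous_const continuous_abs).measurableSet
  have heq : ∀ A : ℝ, (∫ u in {u : ℝ | A ≤ |u|}, ψ u)
      = ∫ u, Set.indicator {u : ℝ | A ≤ |u|} ψ u := fun A => (integral_indicator (hms A)).symm
  simp_rw [heq]
  have h0 : (0 : ℝ) = ∫ u : ℝ, (0 : ℝ) := by simp
  rw [h0]
  apply tendsto_integral_filter_of_dominated_convergence (fun u => |ψ u|)
  · exact Filter.Eventually.of_forall fun A =>
      hψ.aestronglyMeasurable.indicator (hms A)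
  · refine Filter.Eventually.of_forall fun A => Filter.Eventually.of_forall fun u => ?_
    rw [Real.norm_eq_abs]
    by_cases hu : u ∈ {u : ℝ | A ≤ |u|}
    · rw [Set.indicator_of_mem hu]
    · rw [Set.indicator_of_notMem hu]; simp [abs_nonneg]
  · exact hψ.abs
  · refine Filter.Eventually.of_forall fun u => ?_
    apply Filter.Tendsto.congr' _ tendsto_const_nhds
    filter_upwards [Filter.eventually_gt_atTop |u|] with A hA
    exact (Set.indicator_of_notMem (by simp only [Set.mem_setOf_eq, not_le]; exact hA) ψ).symm

end

noncomputable section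

variable {Ω : Type*} [MeasurableSpace Ω] (μ : Measure Ω) [IsProbabilityMeasure μ]

lemma LLT_abs_exp_I (u r : ℝ) : ‖Complex.exp (Complex.I * u * r)‖ = 1 := by
  rw [show Complex.I * (u:ℂ) * (r:ℂ) = ((u*r : ℝ):ℂ) * Complex.I by push_cast; ring,
    Complex.norm_exp_ofReal_mul_I]

lemma LLT_abs_exp_negI (u r : ℝ) : ‖Complex.exp (-Complex.I * u * r)‖ = 1 := by
  rw [show -Complex.I * (u:ℂ) * (r:ℂ) = ((-(u*r) : ℝ):ℂ) * Complex.I by push_cast; ring,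
    Complex.norm_exp_ofReal_mul_I]

lemma LLT_key (S : Ω → ℤ) (hS : Measurable S) (a b A ε : ℝ) (hb : 0 < b) (hA : 0 < A)
    (hAb : A ≤ b * π) (hε0 : 0 ≤ ε) (φ : ℝ → ℝ) (hφint : Integrable φ)
    (hφ : ∀ t ∈ Set.Icc (-π) π,
      ‖∫ ω, Complex.exp (Complex.I * t * (S ω : ℤ)) ∂μ‖ ≤ φ (b * t))
    (hε : ∀ u ∈ Set.Icc (-A) A,
      ‖(∫ ω, Complex.exp (Complex.I * u * ((S ω - a) / b)) ∂μ)
        - Complex.exp (-(u:ℂ) ^ 2 / 2)‖ ≤ ε)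
    (k : ℤ) :
    |b * Real.sqrt (2*π) * (μ {ω | S ω = k}).toReal - Real.exp (-((k:ℝ) - a)^2/(2*b^2))|
      ≤ (2*A*ε + ∫ u in {u : ℝ | A ≤ |u|}, (|φ u| + 2*Real.exp (-(u^2)/2)))
        / Real.sqrt (2*π) := by
  have hπ := Real.pi_pos
  set x : ℝ := ((k:ℝ) - a)/b with hx
  set g : ℝ → ℂ := fun u => ∫ ω, Complex.exp (Complex.I * u * ((S ω - a) / b)) ∂μ with hg
  set γ : ℝ → ℂ := fun u => Complex.exp (-(u:ℂ)^2/2) with hγ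
  set e : ℝ → ℂ := fun u => Complex.exp (-Complex.I * u * x) with he
  set f : ℝ → ℂ := fun t => ∫ ω, Complex.exp (Complex.I * t * (S ω : ℤ)) ∂μ with hf
  set s : Set ℝ := Set.Ioc (-(b*π)) (b*π) with hs
  set tail : Set ℝ := {u : ℝ | A ≤ |u|} with htail
  have hbne : (b:ℂ) ≠ 0 := by exact_mod_cast hb.ne'
  have hsm : MeasurableSet s := measurableSet_Ioc
  have htm : MeasurableSet tail := (isClosed_le continuous_const continuous_abs).measurableSet
  -- pointwise identities and bounds
  have hγreal : ∀ u : ℝ, γ u = ((Real.exp (-(u^2)/2) : ℝ) : ℂ) := by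
    intro u
    simp only [hγ, Complex.ofReal_exp]
    congr 1
    push_cast
    ring
  have hγabs : ∀ u : ℝ, ‖γ u‖ = Real.exp (-(u^2)/2) := by
    intro u
    rw [hγreal u, Complex.norm_real, Real.norm_eq_abs, abs_of_pos (Real.exp_pos _)]
  have heabs : ∀ u : ℝ, ‖e u‖ = 1 := fun u => LLT_abs_exp_negI u x
  have hgabs : ∀ u : ℝ, ‖g u‖ ≤ 1 := by
    intro u
    have h : ‖g u‖ ≤ 1 * (μ Set.univ).toReal := by
      simp only [hg]
      apply norm_integral_le_of_norm_le_const
      refine Filter.Eventually.of_forall fun ω => ?_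
      rw [
        show ((S ω : ℂ) - a)/b = (((S ω - a)/b : ℝ) : ℂ) by push_cast; ring]
      exact le_of_eq (LLT_abs_exp_I u _)
    simpa using h
  have hgφ : ∀ u ∈ s, ‖g u‖ ≤ |φ u| := by
    intro u hu
    have hub : u / b ∈ Set.Icc (-π) π := by
      constructor
      · rw [le_div_iff₀ hb]; linarith [hu.1]
      · rw [div_le_iff₀ hb]; linarith [hu.2]
    have hgf : g u = Complex.exp (-Complex.I * u * ((a/b : ℝ) : ℂ)) * f (u/b) := by
      simp only [hg, hf]
      rw [← integral_const_mul]
      congr 1; ext ω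
      rw [← Complex.exp_add]
      congr 1
      push_cast
      field_simp
      ring
    rw [hgf, norm_mul, LLT_abs_exp_negI]
    have := hφ (u/b) hub
    rw [mul_div_cancel₀ _ hb.ne'] at this
    calc 1 * ‖f (u/b)‖ = ‖f (u/b)‖ := one_mul _
      _ ≤ φ u := this
      _ ≤ |φ u| := le_abs_self _
  -- measurability / integrability
  have hgsm : StronglyMeasurable g := by
    apply MeasureTheory.StronglyMeasurable.integral_prod_right'
      (f := fun p : ℝ × Ω => Complex.exp (Complex.I * p.1 * ((S p.2 - a) / b)))
    apply Measurable.stronglyMeasurable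
    apply Complex.measurable_exp.comp
    apply Measurable.mul
    · exact (Complex.measurable_ofReal.comp measurable_fst).const_mul _
    · apply Measurable.div_const
      apply Measurable.sub_const
      exact (measurable_from_top (f := (fun m : ℤ => ((m : ℂ))))).comp (hS.comp measurable_snd)
  haveI hfinres : IsFiniteMeasure (volume.restrict s) := by
    constructor
    rw [Measure.restrict_apply_univ]
    exact measure_Ioc_lt_top
  have hγexpint : Integrable (fun u : ℝ => Real.exp (-(u^2)/2)) := by
    have h12 : (0:ℝ) < 1/2 := by norm_num
    have := integrable_exp_neg_mul_sq h12
    convert this using 2 with u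
    ring
  have hγint : Integrable γ := by
    apply (hγexpint.mono' ?_ ?_ : Integrable (fun u => γ u))
    · apply Continuous.aestronglyMeasurable
      simp only [hγ]; fun_prop
    · refine Filter.Eventually.of_forall fun u => ?_
      rw [hγabs u]
  have heγint : Integrable (fun u => e u * γ u) := by
    apply hγexpint.mono' ?_ ?_
    · apply Continuous.aestronglyMeasurable
      simp only [he, hγ]; fun_prop
    · refine Filter.Eventually.of_forall fun u => ?_
      rw [norm_mul, heabs u, one_mul, hγabs u]
  have hegint : IntegrableOn (fun u => e u * g u) s := by
    apply (integrable_const (1:ℝ)).mono'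
    · exact (((Complex.continuous_exp.comp (by fun_prop)).aestronglyMeasurable).mul
        hgsm.aestronglyMeasurable).restrict
    · refine Filter.Eventually.of_forall fun u => ?_
      rw [norm_mul, heabs u, one_mul]
      exact hgabs u
  have hgints : IntegrableOn g s := by
    apply (integrable_const (1:ℝ)).mono'
    · exact hgsm.aestronglyMeasurable.restrict
    · exact Filter.Eventually.of_forall fun u => hgabs u
  have hnints : IntegrableOn (fun u => ‖g u - γ u‖) s := by
    apply (hgints.sub hγint.integrableOn).norm.congr
    exact Filter.Eventually.of_forall fun u => rfl
  have hψtail : IntegrableOn (fun u => |φ u| + Real.exp (-(u^2)/2)) tail := by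
    exact (hφint.abs.add hγexpint).integrableOn
  -- Step 1: inversion identity
  have hinv : (∫ u in s, e u * g u)
      = ((2*π*b * (μ {ω | S ω = k}).toReal : ℝ) : ℂ) := by
    have hid : ∀ u : ℝ, e u * g u
        = Complex.exp (-Complex.I * ((u/b : ℝ):ℂ) * k) * f (u/b) := by
      intro u
      simp only [he, hg, hf]
      rw [← integral_const_mul, ← integral_const_mul]
      congr 1; ext ω
      rw [← Complex.exp_add, ← Complex.exp_add]
      congr 1
      rw [hx]
      push_cast
      field_simp
      ring
    have hle : -(b*π) ≤ b*π := by nlinarith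
    rw [← intervalIntegral.integral_of_le hle]
    have : (∫ u in -(b*π)..(b*π), e u * g u)
        = ∫ u in -(b*π)..(b*π),
            (fun t : ℝ => Complex.exp (-Complex.I * (t:ℂ) * k) * f t) (u / b) := by
      apply intervalIntegral.integral_congr
      intro u _
      exact hid u
    rw [this, intervalIntegral.integral_comp_div
      (fun t : ℝ => Complex.exp (-Complex.I * (t:ℂ) * k) * f t) hb.ne']
    rw [show -(b*π)/b = -π by rw [neg_div, mul_comm b π, mul_div_assoc, div_self hb.ne', mul_one], show (b*π)/b = π by rw [mul_comm b π, mul_div_assoc, div_self hb.ne', mul_one]]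
    rw [intervalIntegral.integral_of_le (by linarith : -π ≤ π)]
    rw [LLT_inversion μ S hS k]
    push_cast
    rw [Complex.real_smul]
    ring
  -- Step 2: Gaussian identity
  have hgauss : (∫ u : ℝ, e u * γ u)
      = ((Real.sqrt (2*π) * Real.exp (-((k:ℝ)-a)^2/(2*b^2)) : ℝ) : ℂ) := by
    simp only [he, hγ]
    rw [LLT_gauss x]
    rw [show -x^2/2 = -((k:ℝ)-a)^2/(2*b^2) by rw [hx, div_pow]; ring]
    push_cast
    ring
  -- Step 3: the difference
  set D : ℝ := b * Real.sqrt (2*π) * (μ {ω | S ω = k}).toReal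
      - Real.exp (-((k:ℝ) - a)^2/(2*b^2)) with hD
  have hsq : Real.sqrt (2*π) * Real.sqrt (2*π) = 2*π :=
    Real.mul_self_sqrt (by positivity)
  have hdiff : ((D * Real.sqrt (2*π) : ℝ) : ℂ)
      = (∫ u in s, e u * (g u - γ u)) - ∫ u in sᶜ, e u * γ u := by
    have h1 : (∫ u : ℝ, e u * γ u)
        = (∫ u in s, e u * γ u) + ∫ u in sᶜ, e u * γ u :=
      (integral_add_compl hsm heγint).symm
    have h2 : (∫ u in s, e u * (g u - γ u))
        = (∫ u in s, e u * g u) - ∫ u in s, e u * γ u := by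
      simp_rw [mul_sub]
      exact integral_sub hegint heγint.integrableOn
    rw [h2, hinv]
    have h3 : (∫ u in sᶜ, e u * γ u)
        = (∫ u : ℝ, e u * γ u) - ∫ u in s, e u * γ u := by
      rw [h1]; ring
    rw [h3, hgauss, hD]
    have h4 : ((Real.sqrt (2*π) : ℝ):ℂ) * ((Real.sqrt (2*π):ℝ):ℂ) = 2*(π:ℂ) := by
      rw [← Complex.ofReal_mul, hsq]; push_cast; ring
    push_cast
    linear_combination ((b:ℂ) * ((μ {ω | S ω = k}).toReal : ℂ)) * h4
  -- Step 4: estimates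
  have hDabs : |D| * Real.sqrt (2*π)
      = ‖(∫ u in s, e u * (g u - γ u)) - ∫ u in sᶜ, e u * γ u‖ := by
    rw [← hdiff, Complex.norm_real, Real.norm_eq_abs, abs_mul, abs_of_nonneg (Real.sqrt_nonneg _)]
  set t : Set ℝ := Set.Icc (-A) A ∩ s with ht
  have htms : MeasurableSet t := measurableSet_Icc.inter hsm
  have hts : t ⊆ s := Set.inter_subset_right
  have hvt : volume t < ⊤ :=
    lt_of_le_of_lt (measure_mono Set.inter_subset_left) measure_Icc_lt_top
  have hstdiff : s \ t ⊆ tail := by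
    intro u hu
    rcases hu with ⟨hus, hut⟩
    simp only [htail, Set.mem_setOf_eq]
    by_contra hcon
    push_neg at hcon
    exact hut ⟨Set.mem_Icc.mpr ⟨by linarith [neg_abs_le u], by linarith [le_abs_self u]⟩, hus⟩
  have hcompl_tail : sᶜ ⊆ tail := by
    intro u hu
    simp only [hs, Set.mem_compl_iff, Set.mem_Ioc, not_and_or, not_lt, not_le] at hu
    simp only [htail, Set.mem_setOf_eq]
    rcases hu with h | h
    · calc A ≤ b*π := hAb
        _ ≤ -u := by linarith
        _ ≤ |u| := neg_le_abs u
    · calc A ≤ b*π := hAb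
        _ ≤ u := h.le
        _ ≤ |u| := le_abs_self u
  have hP1 : ‖(∫ u in s, e u * (g u - γ u))‖
      ≤ ∫ u in s, ‖g u - γ u‖ := by
    refine le_trans (norm_integral_le_integral_norm _) (le_of_eq ?_)
    refine integral_congr_ae (Filter.Eventually.of_forall fun u => ?_)
    show ‖e u * (g u - γ u)‖ = ‖g u - γ u‖
    rw [norm_mul, heabs u, one_mul]
  have hsplit2 : (∫ u in s, ‖g u - γ u‖)
      = (∫ u in t, ‖g u - γ u‖)
        + ∫ u in s \ t, ‖g u - γ u‖ := by
    have h := setIntegral_union (disjoint_sdiff_self_right) (hsm.diff htms)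
      (hnints.mono_set hts) (hnints.mono_set Set.diff_subset)
    rw [Set.union_diff_cancel hts] at h
    exact h
  have hInt_t : (∫ u in t, ‖g u - γ u‖) ≤ 2*A*ε := by
    have h1 : (∫ u in t, ‖g u - γ u‖) ≤ ∫ u in t, ε := by
      apply setIntegral_mono_on (hnints.mono_set hts)
        (integrableOn_const hvt.ne) htms
      intro u hu
      have hu' : u ∈ Set.Icc (-A) A := hu.1
      simpa only [hg, hγ] using hε u hu'
    have h2 : (∫ u in t, ε) ≤ 2*A*ε := by
      rw [setIntegral_const, smul_eq_mul]
      have hle : (volume t).toReal ≤ 2*A := by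
        have := ENNReal.toReal_mono (measure_Icc_lt_top (μ := volume) (a := -A) (b := A)).ne
          (measure_mono (Set.inter_subset_left : t ⊆ Set.Icc (-A) A))
        rw [Real.volume_Icc, ENNReal.toReal_ofReal (by linarith)] at this
        linarith
      exact mul_le_mul_of_nonneg_right hle hε0 |>.trans (le_of_eq rfl)
    exact h1.trans h2
  have hInt_st : (∫ u in s \ t, ‖g u - γ u‖)
      ≤ ∫ u in tail, (|φ u| + Real.exp (-(u^2)/2)) := by
    have h1 : (∫ u in s \ t, ‖g u - γ u‖)
        ≤ ∫ u in s \ t, (|φ u| + Real.exp (-(u^2)/2)) := by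
      apply setIntegral_mono_on (hnints.mono_set Set.diff_subset)
        (hψtail.mono_set hstdiff) (hsm.diff htms)
      intro u hu
      calc ‖g u - γ u‖ ≤ ‖g u‖ + ‖γ u‖ := by
            exact norm_sub_le _ _
        _ ≤ |φ u| + Real.exp (-(u^2)/2) := by
            rw [hγabs u]
            exact add_le_add_left (hgφ u hu.1) _
    refine h1.trans (setIntegral_mono_set hψtail ?_ (HasSubset.Subset.eventuallyLE hstdiff))
    refine Filter.Eventually.of_forall fun u => ?_
    positivity
  have hP2 : ‖∫ u in sᶜ, e u * γ u‖ ≤ ∫ u in tail, Real.exp (-(u^2)/2) := by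
    refine le_trans (norm_integral_le_integral_norm _) ?_
    have heq : (∫ u in sᶜ, ‖e u * γ u‖) = ∫ u in sᶜ, Real.exp (-(u^2)/2) := by
      refine integral_congr_ae (Filter.Eventually.of_forall fun u => ?_)
      show ‖e u * γ u‖ = Real.exp (-(u^2)/2)
      rw [norm_mul, heabs u, one_mul, hγabs u]
    rw [heq]
    refine setIntegral_mono_set hγexpint.integrableOn ?_
      (HasSubset.Subset.eventuallyLE hcompl_tail)
    exact Filter.Eventually.of_forall fun u => (Real.exp_pos _).le
  have hT : (∫ u in tail, (|φ u| + Real.exp (-(u^2)/2))) + ∫ u in tail, Real.exp (-(u^2)/2)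
      = ∫ u in tail, (|φ u| + 2*Real.exp (-(u^2)/2)) := by
    rw [← integral_add hψtail hγexpint.integrableOn]
    refine integral_congr_ae (Filter.Eventually.of_forall fun u => ?_)
    show |φ u| + Real.exp (-(u^2)/2) + Real.exp (-(u^2)/2) = |φ u| + 2*Real.exp (-(u^2)/2)
    ring
  have hfinal : |D| * Real.sqrt (2*π)
      ≤ 2*A*ε + ∫ u in tail, (|φ u| + 2*Real.exp (-(u^2)/2)) := by
    rw [hDabs]
    calc ‖(∫ u in s, e u * (g u - γ u)) - ∫ u in sᶜ, e u * γ u‖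
        ≤ ‖(∫ u in s, e u * (g u - γ u))‖
          + ‖∫ u in sᶜ, e u * γ u‖ := by
          exact norm_sub_le _ _
      _ ≤ (∫ u in s, ‖g u - γ u‖) + ∫ u in tail, Real.exp (-(u^2)/2) :=
          add_le_add hP1 hP2
      _ ≤ (2*A*ε + ∫ u in tail, (|φ u| + Real.exp (-(u^2)/2)))
            + ∫ u in tail, Real.exp (-(u^2)/2) := by
          rw [hsplit2]
          exact add_le_add_left (add_le_add hInt_t hInt_st) _
      _ = 2*A*ε + ∫ u in tail, (|φ u| + 2*Real.exp (-(u^2)/2)) := by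
          rw [add_assoc, hT]
  rw [le_div_iff₀ (by positivity : (0:ℝ) < Real.sqrt (2*π))]
  exact hfinal

end

noncomputable section
open Real

lemma LLT_min_atTop {f g : ℕ → ℝ} (hf : Tendsto f atTop atTop) (hg : Tendsto g atTop atTop) :
    Tendsto (fun N => min (f N) (g N)) atTop atTop := by
  rw [tendsto_atTop] at *
  intro c
  filter_upwards [hf c, hg c] with N h1 h2
  exact le_min h1 h2

end

open MeasureTheory ProbabilityTheory Filter

/-- **Local Limit Theorem** for triangular arrays of independent integer-valued
random variables. -/
theorem local_limit_theorem
    {Ω : ℕ → Type*} [∀ N, MeasurableSpace (Ω N)]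
    (μ : ∀ N, Measure (Ω N)) [∀ N, IsProbabilityMeasure (μ N)]
    (J : ℕ → ℕ) (hJ : ∀ N, 1 ≤ J N)
    (X : (N : ℕ) → Fin (J N) → Ω N → ℤ)
    (hmeas : ∀ N j, Measurable (X N j))
    (hL2 : ∀ N j, MemLp (fun ω => (X N j ω : ℝ)) 2 (μ N))
    (hindep : ∀ N, iIndepFun (X N) (μ N))
    (S : (N : ℕ) → Ω N → ℤ) (hS : ∀ N ω, S N ω = ∑ j, X N j ω)
    (a : ℕ → ℝ) (ha : ∀ N, a N = ∫ ω, (S N ω : ℝ) ∂(μ N))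
    (b : ℕ → ℝ) (hb : ∀ N, b N = Real.sqrt (variance (fun ω => (S N ω : ℝ)) (μ N)))
    -- (1) `b N → ∞`
    (hbinf : Tendsto b atTop atTop)
    -- (2) uniform convergence of characteristic functions on growing intervals
    (hCLT : ∃ A : ℕ → ℝ, (∀ N, 0 < A N) ∧ Tendsto A atTop atTop ∧
      Tendsto (fun N => ⨆ t ∈ Set.Icc (-(A N)) (A N),
        ‖(∫ ω, Complex.exp (Complex.I * t * ((S N ω - a N) / b N)) ∂(μ N))
          - Complex.exp (-(t : ℂ) ^ 2 / 2)‖) atTop (nhds 0))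
    -- (3) integrable domination of the characteristic functions
    (hdom : ∃ φ : ℝ → ℝ, Integrable φ (volume : Measure ℝ) ∧
      ∀ N : ℕ, ∀ t ∈ Set.Icc (-Real.pi) Real.pi,
        ‖∫ ω, Complex.exp (Complex.I * t * (S N ω : ℤ)) ∂(μ N)‖ ≤ φ (b N * t)) :
    Tendsto (fun N => ⨆ k : ℤ,
      (b N * Real.sqrt (2 * Real.pi) * ((μ N) {ω | S N ω = k}).toReal
        - Real.exp (-((k : ℝ) - a N) ^ 2 / (2 * b N ^ 2)))) atTop (nhds 0) := by
  obtain ⟨A, hApos, hAtop, hAsup⟩ := hCLT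
  obtain ⟨φ, hφint, hφ⟩ := hdom
  have hπ := Real.pi_pos
  -- measurability of S N
  have hSmeas : ∀ N, Measurable (S N) := by
    intro N
    have : S N = fun ω => ∑ j, X N j ω := funext (hS N)
    rw [this]
    exact Finset.measurable_sum _ (fun j _ => hmeas N j)
  -- nonnegativity of b
  have hbnn : ∀ N, 0 ≤ b N := fun N => (hb N) ▸ Real.sqrt_nonneg _
  -- abbreviations
  set F : ℕ → ℝ → ℝ := fun N t =>
    ‖(∫ ω, Complex.exp (Complex.I * t * ((S N ω - a N) / b N)) ∂(μ N))
      - Complex.exp (-(t : ℂ) ^ 2 / 2)‖ with hF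
  set ε : ℕ → ℝ := fun N => ⨆ t ∈ Set.Icc (-(A N)) (A N), F N t with hεdef
  have hεtendsto : Tendsto ε atTop (nhds 0) := hAsup
  -- uniform bound on F
  have hF2 : ∀ N t, F N t ≤ 2 := by
    intro N t
    have h1 : ‖∫ ω, Complex.exp (Complex.I * t * ((S N ω - a N) / b N)) ∂(μ N)‖ ≤ 1 := by
      have h : ‖∫ ω, Complex.exp (Complex.I * t * ((S N ω - a N) / b N)) ∂(μ N)‖
          ≤ 1 * ((μ N) Set.univ).toReal := by
        apply norm_integral_le_of_norm_le_const
        refine Filter.Eventually.of_forall fun ω => ?_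
        rw [
          show ((S N ω : ℂ) - a N)/(b N) = (((S N ω - a N)/(b N) : ℝ) : ℂ) by push_cast; ring]
        exact le_of_eq (LLT_abs_exp_I t _)
      simpa using h
    have h2 : ‖Complex.exp (-(t:ℂ)^2/2)‖ ≤ 1 := by
      rw [show (-(t:ℂ)^2/2) = (((-t^2/2 : ℝ)) : ℂ) by push_cast; ring, ← Complex.ofReal_exp,
        Complex.norm_real, Real.norm_eq_abs, abs_of_pos (Real.exp_pos _)]
      exact Real.exp_le_one_iff.mpr (by nlinarith)
    calc F N t ≤ ‖∫ ω, Complex.exp (Complex.I * t * ((S N ω - a N) / b N)) ∂(μ N)‖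
          + ‖Complex.exp (-(t:ℂ)^2/2)‖ := by
          rw [hF]
          simp only []
          exact norm_sub_le _ _
      _ ≤ 2 := by linarith
  -- sup bound: F N t ≤ ε N on the interval
  have hFle : ∀ N, ∀ t ∈ Set.Icc (-(A N)) (A N), F N t ≤ ε N := by
    intro N t ht
    have hbdd : BddAbove (Set.range fun t => ⨆ (_ : t ∈ Set.Icc (-(A N)) (A N)), F N t) := by
      refine ⟨2, ?_⟩
      rintro y ⟨u, rfl⟩
      exact Real.iSup_le (fun _ => hF2 N u) (by norm_num)
    have h1 : F N t ≤ ⨆ (_ : t ∈ Set.Icc (-(A N)) (A N)), F N t := by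
      apply le_ciSup (f := fun _ : t ∈ Set.Icc (-(A N)) (A N) => F N t) ?_ ht
      exact ⟨F N t, by rintro y ⟨h, rfl⟩; exact le_rfl⟩
    exact h1.trans (le_ciSup hbdd t)
  have hε0 : ∀ N, 0 ≤ ε N := by
    intro N
    have h0 : (0:ℝ) ∈ Set.Icc (-(A N)) (A N) := by
      constructor <;> [linarith [hApos N]; linarith [hApos N]]
    exact (norm_nonneg _).trans (hFle N 0 h0)
  -- auxiliary sequences
  set δ : ℕ → ℝ := fun N => max (ε N) (1/(N+1)) with hδdef
  have hδpos : ∀ N, 0 < δ N := fun N => lt_max_of_lt_right (by positivity)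
  have hδ0 : Tendsto δ atTop (nhds 0) := by
    have h := hεtendsto.max tendsto_one_div_add_atTop_nhds_zero_nat
    rw [show (0:ℝ) = max 0 0 by simp]
    exact h
  set M : ℕ → ℝ := fun N => 1 / Real.sqrt (δ N) with hMdef
  have hMpos : ∀ N, 0 < M N := fun N => by
    have := hδpos N
    positivity
  have hsqrtδ : Tendsto (fun N => Real.sqrt (δ N)) atTop (nhds 0) := by
    have h := (Real.continuous_sqrt.tendsto 0).comp hδ0
    simpa [Function.comp_def] using h
  have hMtop : Tendsto M atTop atTop := by
    rw [hMdef]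
    simp_rw [one_div]
    apply Filter.Tendsto.inv_tendsto_nhdsGT_zero
    apply tendsto_nhdsWithin_of_tendsto_nhds_of_eventually_within _ hsqrtδ
    exact Filter.Eventually.of_forall fun N => Real.sqrt_pos.mpr (hδpos N)
  have hMε : ∀ N, M N * ε N ≤ Real.sqrt (δ N) := by
    intro N
    rw [hMdef]
    simp only [one_div]
    rw [inv_mul_eq_div]
    calc ε N / Real.sqrt (δ N) ≤ δ N / Real.sqrt (δ N) := by
          have h1 : ε N ≤ δ N := le_max_left _ _
          have h2 : (0:ℝ) < Real.sqrt (δ N) := Real.sqrt_pos.mpr (hδpos N)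
          gcongr
      _ = Real.sqrt (δ N) := Real.div_sqrt
  -- the cut-off sequence
  set A' : ℕ → ℝ := fun N => min (min (A N) (M N)) (b N * π) with hA'def
  have hA'top : Tendsto A' atTop atTop :=
    LLT_min_atTop (LLT_min_atTop hAtop hMtop) (hbinf.atTop_mul_const hπ)
  -- tail function
  set ψ : ℝ → ℝ := fun u => |φ u| + 2*Real.exp (-(u^2)/2) with hψdef
  have hψint : Integrable ψ := by
    apply hφint.abs.add
    have h12 : (0:ℝ) < 1/2 := by norm_num
    have h := (integrable_exp_neg_mul_sq h12).const_mul 2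
    convert h using 2 with u
    rfl
    ring
  set T : ℝ → ℝ := fun R => ∫ u in {u : ℝ | R ≤ |u|}, ψ u with hTdef
  have hTtend : Tendsto (fun N => T (A' N)) atTop (nhds 0) := (LLT_tail ψ hψint).comp hA'top
  set c : ℕ → ℝ := fun N => (2*(A' N)*(ε N) + T (A' N)) / Real.sqrt (2*π) with hcdef
  have hctend : Tendsto c atTop (nhds 0) := by
    have h1 : Tendsto (fun N => 2*(A' N)*(ε N)) atTop (nhds 0) := by
      have hup : Tendsto (fun N => 2*Real.sqrt (δ N)) atTop (nhds 0) := by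
        have := hsqrtδ.const_mul 2
        simpa using this
      refine tendsto_of_tendsto_of_tendsto_of_le_of_le (g := fun _ => (0:ℝ))
        (h := fun N => 2*Real.sqrt (δ N)) tendsto_const_nhds hup ?_ ?_
      · intro N
        have := hε0 N
        have hA'0 : 0 ≤ A' N := le_min (le_min (hApos N).le (hMpos N).le)
          (mul_nonneg (hbnn N) hπ.le)
        positivity
      · intro N
        have hA'M : A' N ≤ M N := (min_le_left _ _).trans (min_le_right _ _)
        have h2 : A' N * ε N ≤ M N * ε N := mul_le_mul_of_nonneg_right hA'M (hε0 N)
        have h3 := hMε N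
        calc 2*(A' N)*(ε N) = 2*((A' N)*(ε N)) := by ring
          _ ≤ 2*Real.sqrt (δ N) := by linarith
    have h2 := (h1.add hTtend).div_const (Real.sqrt (2*π))
    rw [show (0:ℝ) = (0+0)/Real.sqrt (2*π) by simp]
    exact h2
  -- key eventual bound
  have hkey : ∀ᶠ N in atTop, ∀ k : ℤ,
      |b N * Real.sqrt (2*π) * ((μ N) {ω | S N ω = k}).toReal
        - Real.exp (-((k:ℝ) - a N)^2/(2*(b N)^2))| ≤ c N := by
    filter_upwards [hbinf.eventually_ge_atTop 1] with N hbN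
    intro k
    have hbpos : (0:ℝ) < b N := lt_of_lt_of_le one_pos hbN
    have hA'pos : 0 < A' N := lt_min (lt_min (hApos N) (hMpos N)) (by positivity)
    have hA'le : A' N ≤ b N * π := min_le_right _ _
    have hεA' : ∀ u ∈ Set.Icc (-(A' N)) (A' N),
        ‖(∫ ω, Complex.exp (Complex.I * u * ((S N ω - a N) / b N)) ∂(μ N))
          - Complex.exp (-(u:ℂ) ^ 2 / 2)‖ ≤ ε N := by
      intro u hu
      have hA'A : A' N ≤ A N := (min_le_left _ _).trans (min_le_left _ _)
      exact hFle N u ⟨by linarith [hu.1], by linarith [hu.2]⟩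
    exact LLT_key (μ N) (S N) (hSmeas N) (a N) (b N) (A' N) (ε N) hbpos hA'pos hA'le
      (hε0 N) φ hφint (hφ N) hεA' k
  -- final squeeze
  have hcneg : Tendsto (fun N => -(c N)) atTop (nhds 0) := by
    have := hctend.neg
    simpa using this
  refine tendsto_of_tendsto_of_tendsto_of_le_of_le' hcneg hctend ?_ ?_
  · filter_upwards [hkey] with N hN
    have hbdd : BddAbove (Set.range (fun k : ℤ =>
        b N * Real.sqrt (2*π) * ((μ N) {ω | S N ω = k}).toReal
          - Real.exp (-((k:ℝ) - a N)^2/(2*(b N)^2)))) := by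
      refine ⟨c N, ?_⟩
      rintro y ⟨k, rfl⟩
      exact (abs_le.1 (hN k)).2
    calc -(c N) ≤ b N * Real.sqrt (2*π) * ((μ N) {ω | S N ω = (0:ℤ)}).toReal
          - Real.exp (-(((0:ℤ):ℝ) - a N)^2/(2*(b N)^2)) := (abs_le.1 (hN 0)).1
      _ ≤ _ := le_ciSup hbdd (0:ℤ)
  · filter_upwards [hkey] with N hN
    exact ciSup_le fun k => (abs_le.1 (hN k)).2
end

section
/- (Gnedenko) Let X be an integer-valued random variable, p_n = P(X = n) for n ∈ ℤ, and s = Σ_{l∈ℤ} p_{2l} p_{2l+1} / (p_{2l} + p_{2l+1}), with the convention that a summand is 0 when p_{2l} = p_{2l+1} = 0. Then for all t with |t| ≤ π, |E(e^{itX})| ≤ exp(−(2/π²) s t²). -/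
open MeasureTheory ProbabilityTheory

lemma key_abs (a b t : ℝ) (ha : 0 ≤ a) (hb : 0 ≤ b) :
    ‖(a : ℂ) + (b : ℂ) * Complex.exp (Complex.I * t)‖ ≤
      (a + b) - a * b / (a + b) * (1 - Real.cos t) := by
  have hz : ((a : ℂ) + (b : ℂ) * Complex.exp (Complex.I * t)) =
      Complex.ofReal (a + b * Real.cos t) + Complex.ofReal (b * Real.sin t) * Complex.I := by
    rw [mul_comm Complex.I (t : ℂ), Complex.exp_mul_I]
    push_cast
    ring
  have habs : ‖(a : ℂ) + (b : ℂ) * Complex.exp (Complex.I * t)‖ =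
      Real.sqrt ((a + b * Real.cos t) ^ 2 + (b * Real.sin t) ^ 2) := by
    rw [hz, Complex.norm_def, Complex.normSq_apply]
    simp [pow_two, Complex.cos_ofReal_re, Complex.sin_ofReal_re]
  rw [habs]
  have hpy : Real.sin t ^ 2 + Real.cos t ^ 2 = 1 := Real.sin_sq_add_cos_sq t
  have hc1 : Real.cos t ≤ 1 := Real.cos_le_one t
  have hc2 : -1 ≤ Real.cos t := Real.neg_one_le_cos t
  rcases eq_or_lt_of_le (add_nonneg ha hb) with h0 | h0
  · have ha0 : a = 0 := by linarith
    have hb0 : b = 0 := by linarith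
    simp [ha0, hb0]
  · set q : ℝ := a * b / (a + b) with hq_def
    have hq : q * (a + b) = a * b := div_mul_cancel₀ _ (ne_of_gt h0)
    have hqnn : 0 ≤ q := div_nonneg (mul_nonneg ha hb) (le_of_lt h0)
    have hR : 0 ≤ (a + b) - q * (1 - Real.cos t) := by
      nlinarith [hq, sq_nonneg a, sq_nonneg b,
        mul_nonneg (mul_nonneg ha hb) (by linarith : (0:ℝ) ≤ 1 + Real.cos t)]
    have hS : (a + b * Real.cos t) ^ 2 + (b * Real.sin t) ^ 2 ≤
        ((a + b) - q * (1 - Real.cos t)) ^ 2 := by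
      have hq2 : q * (a + b) * (1 - Real.cos t) = a * b * (1 - Real.cos t) := by rw [hq]
      nlinarith [sq_nonneg (q * (1 - Real.cos t)), hpy, hq2, sq_nonneg b]
    calc Real.sqrt ((a + b * Real.cos t) ^ 2 + (b * Real.sin t) ^ 2)
        ≤ Real.sqrt (((a + b) - q * (1 - Real.cos t)) ^ 2) := Real.sqrt_le_sqrt hS
      _ = (a + b) - q * (1 - Real.cos t) := Real.sqrt_sq hR

def pairEquiv : ℤ × Bool ≃ ℤ where
  toFun p := 2 * p.1 + (if p.2 then 1 else 0)
  invFun n := (n / 2, decide (n % 2 = 1))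
  left_inv := by
    rintro ⟨l, b⟩
    cases b <;> simp <;> omega
  right_inv := by
    intro n
    simp only [Prod.mk.injEq]
    by_cases h : n % 2 = 1 <;> simp [h] <;> omega

set_option maxHeartbeats 800000 in
lemma tsum_pair {M : Type*} [AddCommMonoid M] [TopologicalSpace M] [T3Space M]
    [ContinuousAdd M] (f : ℤ → M) (hf : Summable f) :
    ∑' n : ℤ, f n = ∑' l : ℤ, (f (2 * l) + f (2 * l + 1)) := by
  rw [← pairEquiv.tsum_eq f]
  have hs : Summable (f ∘ pairEquiv) := (pairEquiv.summable_iff).2 hf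
  have hs' : Summable (fun c : ℤ × Bool => f (pairEquiv c)) := hs
  rw [Summable.tsum_prod' hs' (fun l => Summable.of_finite)]
  congr 1
  funext l
  rw [tsum_bool]
  simp [pairEquiv]

lemma summable_even {M : Type*} [AddCommGroup M] [UniformSpace M] [IsUniformAddGroup M]
    [CompleteSpace M] (f : ℤ → M) (hf : Summable f) :
    Summable (fun l : ℤ => f (2 * l)) :=
  hf.comp_injective (fun a b h => by omega)

lemma summable_odd {M : Type*} [AddCommGroup M] [UniformSpace M] [IsUniformAddGroup M]
    [CompleteSpace M] (f : ℤ → M) (hf : Summable f) :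
    Summable (fun l : ℤ => f (2 * l + 1)) :=
  hf.comp_injective (fun a b h => by omega)


/-- **Gnedenko's lemma**: domination of the characteristic function of an integer-valued
random variable.  With `p n = P(X = n)` and
`s = ∑_{l ∈ ℤ} p_{2l} p_{2l+1} / (p_{2l} + p_{2l+1})` (a summand being `0` when
`p_{2l} = p_{2l+1} = 0`, which is the convention of real division by zero in Lean),
one has `|E(e^{itX})| ≤ exp(-(2/π²) s t²)` for `|t| ≤ π`. -/
theorem gnedenko_charfun_bound
    {Ω : Type*} [MeasurableSpace Ω] (μ : Measure Ω) [IsProbabilityMeasure μ]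
    (X : Ω → ℤ) (hX : Measurable X)
    (p : ℤ → ℝ) (hp : ∀ n : ℤ, p n = (μ {ω | X ω = n}).toReal)
    (s : ℝ) (hs : s = ∑' l : ℤ, p (2 * l) * p (2 * l + 1) / (p (2 * l) + p (2 * l + 1))) :
    ∀ t : ℝ, |t| ≤ Real.pi →
      ‖∫ ω, Complex.exp (Complex.I * t * (X ω : ℤ)) ∂μ‖
        ≤ Real.exp (-(2 / Real.pi ^ 2) * s * t ^ 2) := by
  intro t ht
  have hν : ∀ n : ℤ, μ.map X {n} = μ {ω | X ω = n} := fun n => by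
    rw [Measure.map_apply hX (measurableSet_singleton n)]
    rfl
  have hprob : IsProbabilityMeasure (μ.map X) := Measure.isProbabilityMeasure_map hX.aemeasurable
  have hpn : ∀ n : ℤ, p n = (μ.map X {n}).toReal := fun n => by rw [hp, hν]
  have hne : ∀ n : ℤ, μ.map X {n} ≠ ⊤ := fun n => measure_ne_top _ _
  have hsum1' : ∑' n : ℤ, μ.map X {n} = 1 := by
    have hdisj : Pairwise (Function.onFun Disjoint fun n : ℤ => ({n} : Set ℤ)) := by
      intro a b hab
      simp [Function.onFun, Set.disjoint_singleton, hab]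
    calc ∑' n : ℤ, μ.map X {n} = μ.map X (⋃ n : ℤ, {n}) :=
          (measure_iUnion hdisj fun n => measurableSet_singleton n).symm
      _ = μ.map X Set.univ := by congr 1; ext x; simp
      _ = 1 := measure_univ
  have hpnn : ∀ n : ℤ, 0 ≤ p n := fun n => by rw [hp]; exact ENNReal.toReal_nonneg
  have hsummp : Summable p := by
    refine (ENNReal.summable_toReal ?_).congr fun n => (hpn n).symm
    rw [hsum1']; exact ENNReal.one_ne_top
  have hptsum : ∑' n : ℤ, p n = 1 := by
    have h1 := ENNReal.tsum_toReal_eq hne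
    rw [hsum1'] at h1
    rw [tsum_congr (fun n => hpn n), ← h1]
    simp
  -- the integral as a sum
  set g : ℤ → ℂ := fun n => Complex.exp (Complex.I * t * n) with hg_def
  have hg_norm : ∀ n : ℤ, ‖g n‖ = 1 := fun n => by
    simp [hg_def, Complex.norm_exp, Complex.mul_re, Complex.mul_im]
  have hg_int : Integrable g (μ.map X) := by
    refine Integrable.mono' (integrable_const (1 : ℝ))
      (measurable_of_countable g).aestronglyMeasurable
      (Filter.Eventually.of_forall fun n => ?_)
    rw [hg_norm n]
  have hint : (∫ ω, Complex.exp (Complex.I * t * (X ω : ℤ)) ∂μ) =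
      ∑' n : ℤ, (p n : ℂ) * g n := by
    have h1 : (∫ ω, Complex.exp (Complex.I * t * (X ω : ℤ)) ∂μ) = ∫ n, g n ∂(μ.map X) :=
      (integral_map hX.aemeasurable (measurable_of_countable g).aestronglyMeasurable).symm
    rw [h1, integral_countable' hg_int]
    exact tsum_congr fun n => by rw [measureReal_def, ← hpn n, Complex.real_smul]
  -- summability facts
  set q : ℤ → ℝ := fun l => p (2 * l) * p (2 * l + 1) / (p (2 * l) + p (2 * l + 1)) with hq_def
  have hqnn : ∀ l, 0 ≤ q l := fun l =>
    div_nonneg (mul_nonneg (hpnn _) (hpnn _)) (add_nonneg (hpnn _) (hpnn _))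
  have hqle : ∀ l, q l ≤ p (2 * l) := by
    intro l
    rcases eq_or_lt_of_le (add_nonneg (hpnn (2 * l)) (hpnn (2 * l + 1))) with h0 | h0
    · have h2 : p (2 * l) = 0 := by nlinarith [hpnn (2 * l), hpnn (2 * l + 1)]
      simp [hq_def, h2]
    · rw [hq_def, div_le_iff₀ h0]
      nlinarith [hpnn (2 * l), hpnn (2 * l + 1), sq_nonneg (p (2 * l))]
  have hsq : Summable q :=
    (summable_even p hsummp).of_nonneg_of_le hqnn hqle
  have hsnn : 0 ≤ s := hs ▸ tsum_nonneg hqnn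
  have hu : Summable (fun l : ℤ => p (2 * l) + p (2 * l + 1)) :=
    (summable_even p hsummp).add (summable_odd p hsummp)
  have hutsum : ∑' l : ℤ, (p (2 * l) + p (2 * l + 1)) = 1 := by
    rw [← tsum_pair p hsummp]; exact hptsum
  set B : ℝ := 1 - Real.cos t with hB_def
  have hBnn : 0 ≤ B := by
    have := Real.cos_le_one t; simp only [hB_def]; linarith
  -- the complex series
  set fC : ℤ → ℂ := fun n => (p n : ℂ) * g n with hfC_def
  have hfC_norm : ∀ n, ‖fC n‖ = p n := fun n => by
    rw [hfC_def]
    simp only [norm_mul, hg_norm n, mul_one, Complex.norm_real, Real.norm_eq_abs]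
    exact abs_of_nonneg (hpnn n)
  have hfCs : Summable fC :=
    Summable.of_norm_bounded hsummp fun n => le_of_eq (hfC_norm n)
  have hA : ∑' n : ℤ, fC n = ∑' l : ℤ, (fC (2 * l) + fC (2 * l + 1)) := tsum_pair fC hfCs
  have hterm : ∀ l : ℤ, ‖fC (2 * l) + fC (2 * l + 1)‖ ≤
      (p (2 * l) + p (2 * l + 1)) - q l * B := by
    intro l
    have hfactor : fC (2 * l) + fC (2 * l + 1) =
        Complex.exp (Complex.I * t * ((2 * l : ℤ) : ℂ)) *
          ((p (2 * l) : ℂ) + (p (2 * l + 1) : ℂ) * Complex.exp (Complex.I * t)) := by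
      simp only [hfC_def, hg_def]
      rw [show (Complex.I * (t : ℂ) * ((2 * l + 1 : ℤ) : ℂ)) =
        Complex.I * (t : ℂ) * ((2 * l : ℤ) : ℂ) + Complex.I * (t : ℂ) by push_cast; ring,
        Complex.exp_add]
      ring
    rw [hfactor, norm_mul]
    have h1 : ‖Complex.exp (Complex.I * t * ((2 * l : ℤ) : ℂ))‖ = 1 := by
      simp [Complex.norm_exp, Complex.mul_re, Complex.mul_im]
    rw [h1, one_mul]
    exact key_abs _ _ t (hpnn _) (hpnn _)
  have hRHS : Summable (fun l : ℤ => (p (2 * l) + p (2 * l + 1)) - q l * B) :=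
    hu.sub (hsq.mul_right B)
  have hns : Summable (fun l : ℤ => ‖fC (2 * l) + fC (2 * l + 1)‖) :=
    hRHS.of_nonneg_of_le (fun l => norm_nonneg _) hterm
  have hchain : ‖∫ ω, Complex.exp (Complex.I * t * (X ω : ℤ)) ∂μ‖ ≤ 1 - s * B := by
    rw [hint, hA]
    calc ‖∑' l : ℤ, (fC (2 * l) + fC (2 * l + 1))‖
        ≤ ∑' l : ℤ, ‖fC (2 * l) + fC (2 * l + 1)‖ := norm_tsum_le_tsum_norm hns
      _ ≤ ∑' l : ℤ, ((p (2 * l) + p (2 * l + 1)) - q l * B) := Summable.tsum_le_tsum hterm hns hRHS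
      _ = (∑' l : ℤ, (p (2 * l) + p (2 * l + 1))) - ∑' l : ℤ, q l * B :=
          Summable.tsum_sub hu (hsq.mul_right B)
      _ = 1 - s * B := by rw [hutsum, tsum_mul_right, ← hs]
  have hjordan : 2 / Real.pi ^ 2 * t ^ 2 ≤ B := by
    have := Real.cos_le_one_sub_mul_cos_sq ht
    simp only [hB_def]; linarith
  have hexp1 : 1 - s * B ≤ Real.exp (-(s * B)) := by
    have := Real.add_one_le_exp (-(s * B)); linarith
  refine hchain.trans (hexp1.trans ?_)
  rw [Real.exp_le_exp]
  have h2 : 2 / Real.pi ^ 2 * t ^ 2 * s ≤ B * s :=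
    mul_le_mul_of_nonneg_right hjordan hsnn
  nlinarith [h2]
end

section
/- For any C ≥ 1 there exists κ > 0 such that for every ρ > 0 and every c ∈ {0, …, C}, the truncated geometric random variable X_{ρ,c} with parameters ρ and c satisfies |E(e^{i t X_{ρ,c}})| ≤ exp(−(2/π²) κ σ²_{ρ,c} t²) for all |t| ≤ π, where σ²_{ρ,c} denotes the variance of X_{ρ,c}. -/
open MeasureTheory ProbabilityTheory

lemma ae_lt_of_sum {Ω : Type} [MeasurableSpace Ω] (μ : Measure Ω) [IsProbabilityMeasure μ]
    (X : Ω → ℕ) (hX : Measurable X) (n : ℕ)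
    (hsum : ∑ k ∈ Finset.range n, (μ (X ⁻¹' {k})).toReal = 1) :
    ∀ᵐ ω ∂μ, X ω < n := by
  have hm : ∀ k : ℕ, MeasurableSet (X ⁻¹' {k}) := fun k => hX (measurableSet_singleton k)
  have hdisj : (↑(Finset.range n) : Set ℕ).PairwiseDisjoint (fun k => X ⁻¹' {k}) := by
    intro a _ b _ hab
    simp only [Set.disjoint_left]
    intro ω ha hb
    exact hab (ha.symm.trans hb)
  have hU : μ (⋃ k ∈ Finset.range n, X ⁻¹' {k}) = ∑ k ∈ Finset.range n, μ (X ⁻¹' {k}) :=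
    measure_biUnion_finset hdisj fun k _ => hm k
  have hUeq : (⋃ k ∈ Finset.range n, X ⁻¹' {k}) = {ω | X ω < n} := by
    ext ω; simp [Finset.mem_range]
  have htr : (μ {ω | X ω < n}).toReal = 1 := by
    rw [← hUeq, hU, ENNReal.toReal_sum fun k _ => measure_ne_top μ _]
    exact hsum
  have h1 : μ {ω | X ω < n} = 1 := by
    rwa [ENNReal.toReal_eq_one_iff] at htr
  have hms : MeasurableSet {ω | X ω < n} := by
    have : {ω | X ω < n} = X ⁻¹' (Set.Iio n) := rfl
    rw [this]; exact hX measurableSet_Iio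
  rw [Filter.eventually_iff, mem_ae_iff]
  exact (prob_compl_eq_zero_iff hms).mpr h1

lemma integral_comp_of_ae_lt {Ω : Type} {E : Type*} [NormedAddCommGroup E] [NormedSpace ℝ E] [CompleteSpace E]
    [MeasurableSpace Ω] (μ : Measure Ω) [IsProbabilityMeasure μ]
    (X : Ω → ℕ) (hX : Measurable X) (n : ℕ)
    (hae : ∀ᵐ ω ∂μ, X ω < n) (g : ℕ → E) :
    ∫ ω, g (X ω) ∂μ = ∑ k ∈ Finset.range n, (μ (X ⁻¹' {k})).toReal • g k := by
  have hm : ∀ k : ℕ, MeasurableSet (X ⁻¹' {k}) := fun k => hX (measurableSet_singleton k)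
  have h1 : ∫ ω, g (X ω) ∂μ
      = ∫ ω, ∑ k ∈ Finset.range n, (X ⁻¹' {k}).indicator (fun _ => g k) ω ∂μ := by
    apply integral_congr_ae
    filter_upwards [hae] with ω hω
    rw [Finset.sum_eq_single (X ω)]
    · rw [Set.indicator_of_mem]; exact rfl
    · intro b _ hb
      exact Set.indicator_of_notMem (fun h => hb (Set.mem_preimage.mp h).symm) _
    · intro h; exact absurd (Finset.mem_range.mpr hω) h
  rw [h1, integral_finset_sum _ fun k _ => (integrable_const (g k)).indicator (hm k)]
  exact Finset.sum_congr rfl fun k _ => integral_indicator_const (g k) (hm k)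

lemma term_re (t a b : ℝ) (j k : ℕ) :
    ((↑a * Complex.exp (Complex.I * t * j)) *
      (starRingEnd ℂ) (↑b * Complex.exp (Complex.I * t * k))).re
    = a * b * Real.cos (t * ((j : ℝ) - k)) := by
  rw [map_mul, ← Complex.exp_conj]
  have hconj : (starRingEnd ℂ) (Complex.I * t * k) = -(Complex.I * t * k) := by
    simp [map_mul, Complex.conj_I, Complex.conj_ofReal]
  rw [hconj, Complex.conj_ofReal]
  have hexp : Complex.exp (Complex.I * t * j) * Complex.exp (-(Complex.I * t * k))
      = Complex.exp ((t * ((j:ℝ) - k) : ℝ) * Complex.I) := by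
    rw [← Complex.exp_add]; congr 1; push_cast; ring
  have : (↑a * Complex.exp (Complex.I * ↑t * ↑j)) * (↑b * Complex.exp (-(Complex.I * ↑t * ↑k)))
      = ((a * b : ℝ) : ℂ) * Complex.exp ((t * ((j:ℝ) - k) : ℝ) * Complex.I) := by
    rw [← hexp]; push_cast; ring
  rw [this, Complex.re_ofReal_mul, Complex.exp_ofReal_mul_I_re]

lemma charfun_sq_bound (n : ℕ) (p : ℕ → ℝ) (hp : ∀ k, 0 ≤ p k)
    (hsum : ∑ k ∈ Finset.range n, p k = 1) (t : ℝ) :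
    ‖∑ k ∈ Finset.range n, (p k : ℂ) * Complex.exp (Complex.I * t * k)‖ ^ 2
      ≤ 1 - (1 - Real.cos t) * ∑ k ∈ Finset.range (n - 1), p k * p (k + 1) := by
  set z := ∑ k ∈ Finset.range n, (p k : ℂ) * Complex.exp (Complex.I * t * k) with hz
  have habs : ‖z‖ ^ 2 = (z * (starRingEnd ℂ) z).re := by
    rw [Complex.mul_conj, ← Complex.normSq_eq_norm_sq, Complex.ofReal_re]
  have hexpand : (z * (starRingEnd ℂ) z).re
      = ∑ j ∈ Finset.range n, ∑ k ∈ Finset.range n,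
          p j * p k * Real.cos (t * ((j : ℝ) - k)) := by
    rw [hz, map_sum, Finset.sum_mul_sum, Complex.re_sum]
    refine Finset.sum_congr rfl fun j _ => ?_
    rw [Complex.re_sum]
    exact Finset.sum_congr rfl fun k _ => term_re t (p j) (p k) j k
  have hsplit : ∑ j ∈ Finset.range n, ∑ k ∈ Finset.range n,
        p j * p k * Real.cos (t * ((j : ℝ) - k))
      = 1 - ∑ j ∈ Finset.range n, ∑ k ∈ Finset.range n,
          p j * p k * (1 - Real.cos (t * ((j : ℝ) - k))) := by
    have h1 : ∑ j ∈ Finset.range n, ∑ k ∈ Finset.range n, p j * p k = 1 := by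
      rw [← Finset.sum_mul_sum, hsum, one_mul]
    have h2 : ∑ j ∈ Finset.range n, ∑ k ∈ Finset.range n,
        p j * p k * Real.cos (t * ((j : ℝ) - k))
      = (∑ j ∈ Finset.range n, ∑ k ∈ Finset.range n, p j * p k)
        - ∑ j ∈ Finset.range n, ∑ k ∈ Finset.range n,
            p j * p k * (1 - Real.cos (t * ((j : ℝ) - k))) := by
      rw [← Finset.sum_sub_distrib]
      refine Finset.sum_congr rfl fun j _ => ?_
      rw [← Finset.sum_sub_distrib]
      exact Finset.sum_congr rfl fun k _ => by ring
    rw [h2, h1]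
  -- lower bound for the dissipation term
  have hterm_nonneg : ∀ j k : ℕ, 0 ≤ p j * p k * (1 - Real.cos (t * ((j : ℝ) - k))) :=
    fun j k => mul_nonneg (mul_nonneg (hp j) (hp k)) (by linarith [Real.cos_le_one (t * ((j:ℝ) - k))])
  have hD : (1 - Real.cos t) * ∑ k ∈ Finset.range (n - 1), p k * p (k + 1)
      ≤ ∑ j ∈ Finset.range n, ∑ k ∈ Finset.range n,
          p j * p k * (1 - Real.cos (t * ((j : ℝ) - k))) := by
    have step1 : ∀ j ∈ Finset.range n,
        (if j + 1 < n then p j * p (j + 1) * (1 - Real.cos (t * ((j : ℝ) - (j + 1 : ℕ)))) else 0)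
          ≤ ∑ k ∈ Finset.range n, p j * p k * (1 - Real.cos (t * ((j : ℝ) - k))) := by
      intro j _
      split_ifs with h
      · exact Finset.single_le_sum (fun k _ => hterm_nonneg j k) (Finset.mem_range.mpr h)
      · exact Finset.sum_nonneg fun k _ => hterm_nonneg j k
    have step2 : ∑ j ∈ Finset.range n,
        (if j + 1 < n then p j * p (j + 1) * (1 - Real.cos (t * ((j : ℝ) - (j + 1 : ℕ)))) else 0)
        = (1 - Real.cos t) * ∑ k ∈ Finset.range (n - 1), p k * p (k + 1) := by
      rw [Finset.mul_sum]
      rw [← Finset.sum_subset (Finset.range_subset_range.mpr (Nat.sub_le n 1))]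
      · refine Finset.sum_congr rfl fun j hj => ?_
        have hj' : j + 1 < n := by
          have := Finset.mem_range.mp hj; omega
        rw [if_pos hj']
        have : t * ((j : ℝ) - (j + 1 : ℕ)) = -t := by push_cast; ring
        rw [this, Real.cos_neg]; ring
      · intro j hj hj'
        have h1 := Finset.mem_range.mp hj
        have : ¬ (j + 1 < n) := by
          simp only [Finset.mem_range] at hj'; omega
        rw [if_neg this]
    calc (1 - Real.cos t) * ∑ k ∈ Finset.range (n - 1), p k * p (k + 1)
        = ∑ j ∈ Finset.range n, (if j + 1 < n then
            p j * p (j + 1) * (1 - Real.cos (t * ((j : ℝ) - (j + 1 : ℕ)))) else 0) := step2.symm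
      _ ≤ _ := Finset.sum_le_sum step1
  rw [habs, hexpand, hsplit]
  linarith

lemma var_identity (n : ℕ) (p : ℕ → ℝ) (hsum : ∑ k ∈ Finset.range n, p k = 1) :
    (∑ k ∈ Finset.range n, p k * (k : ℝ) ^ 2) - (∑ k ∈ Finset.range n, p k * k) ^ 2
      = (1 / 2) * ∑ j ∈ Finset.range n, ∑ k ∈ Finset.range n,
          p j * p k * ((j : ℝ) - k) ^ 2 := by
  set T1 := ∑ k ∈ Finset.range n, p k * (k : ℝ) with hT1
  set T2 := ∑ k ∈ Finset.range n, p k * (k : ℝ) ^ 2 with hT2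
  have hinner : ∀ j : ℕ, ∑ k ∈ Finset.range n, p j * p k * ((j : ℝ) - k) ^ 2
      = p j * (j : ℝ) ^ 2 + p j * T2 - 2 * (p j * j) * T1 := by
    intro j
    have : ∀ k ∈ Finset.range n, p j * p k * ((j : ℝ) - k) ^ 2
        = p j * (j : ℝ) ^ 2 * p k + p j * (p k * (k : ℝ) ^ 2)
          - 2 * (p j * j) * (p k * k) := fun k _ => by ring
    rw [Finset.sum_congr rfl this]
    simp only [Finset.sum_sub_distrib, Finset.sum_add_distrib, ← Finset.mul_sum]
    rw [hsum]
    ring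
  rw [Finset.sum_congr rfl fun j _ => hinner j]
  simp only [Finset.sum_sub_distrib, Finset.sum_add_distrib, ← Finset.sum_mul]
  rw [hsum]
  have h3 : ∑ x ∈ Finset.range n, 2 * (p x * (x : ℝ)) = 2 * T1 := by
    rw [hT1, Finset.mul_sum]
  rw [h3, ← hT2]
  ring


set_option maxHeartbeats 1000000

/-- Uniform Gnedenko-type domination for the characteristic functions of truncated
geometric random variables (Lemma 2.8 of the paper): for any `C ≥ 1` there is `κ > 0`
such that for every `ρ > 0` and every `c ≤ C`, any random variable with the truncated
geometric distribution of parameters `ρ` and `c` satisfies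
`|E(e^{itX})| ≤ exp(-(2/π²) κ σ² t²)` for `|t| ≤ π`, where `σ²` is its variance. -/
theorem truncated_geometric_charfun_bound (C : ℕ) (hC : 1 ≤ C) :
    ∃ κ : ℝ, 0 < κ ∧
      ∀ (Ω : Type) (_ : MeasurableSpace Ω) (μ : Measure Ω), IsProbabilityMeasure μ →
        ∀ (ρ : ℝ), 0 < ρ → ∀ (c : ℕ), c ≤ C →
          ∀ (X : Ω → ℕ), Measurable X →
            (∀ k ≤ c, (μ {ω | X ω = k}).toReal
                = ρ ^ k / ∑ h ∈ Finset.range (c + 1), ρ ^ h) →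
            ∀ t : ℝ, |t| ≤ Real.pi →
              ‖∫ ω, Complex.exp (Complex.I * t * (X ω : ℕ)) ∂μ‖
                ≤ Real.exp (-(2 / Real.pi ^ 2) * κ
                    * variance (fun ω => (X ω : ℝ)) μ * t ^ 2) := by
  set M : ℝ := (C : ℝ) ^ 2 * ((C : ℝ) + 1) ^ 2 with hM
  have hMpos : 0 < M := by positivity
  refine ⟨1 / (2 * M), by positivity, ?_⟩
  intro Ω mΩ μ hμ ρ hρ c hc X hX hp t ht
  set κ : ℝ := 1 / (2 * M) with hκ
  set n := c + 1 with hn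
  set S : ℝ := ∑ h ∈ Finset.range n, ρ ^ h with hS
  have hSpos : 0 < S := Finset.sum_pos (fun h _ => pow_pos hρ h) ⟨0, by simp [hn]⟩
  set p : ℕ → ℝ := fun k => ρ ^ k / S with hpdef
  have hpnn : ∀ k, 0 ≤ p k := fun k => div_nonneg (pow_nonneg hρ.le k) hSpos.le
  have hpsum : ∑ k ∈ Finset.range n, p k = 1 := by
    rw [hpdef]
    rw [← Finset.sum_div]
    exact div_self hSpos.ne'
  have hμk : ∀ k < n, (μ (X ⁻¹' {k})).toReal = p k := by
    intro k hk
    have : X ⁻¹' {k} = {ω | X ω = k} := rfl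
    rw [this]
    exact hp k (Nat.lt_succ_iff.mp hk)
  have hmsum : ∑ k ∈ Finset.range n, (μ (X ⁻¹' {k})).toReal = 1 := by
    rw [Finset.sum_congr rfl fun k hk => hμk k (Finset.mem_range.mp hk)]
    exact hpsum
  have hae : ∀ᵐ ω ∂μ, X ω < n := ae_lt_of_sum μ X hX n hmsum
  -- the characteristic function as a finite sum
  have hint : ∫ ω, Complex.exp (Complex.I * t * (X ω : ℕ)) ∂μ
      = ∑ k ∈ Finset.range n, ((p k : ℝ) : ℂ) * Complex.exp (Complex.I * t * k) := by
    have := integral_comp_of_ae_lt μ X hX n hae (fun k => Complex.exp (Complex.I * t * k))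
    rw [this]
    refine Finset.sum_congr rfl fun k hk => ?_
    rw [hμk k (Finset.mem_range.mp hk), Complex.real_smul]
  -- moments
  have hmem : MeasureTheory.MemLp (fun ω => (X ω : ℝ)) 2 μ := by
    refine MeasureTheory.MemLp.of_bound
      ((measurable_from_top.comp hX).aestronglyMeasurable) (c : ℝ) ?_
    filter_upwards [hae] with ω hω
    rw [Real.norm_eq_abs, abs_of_nonneg (by positivity)]
    exact_mod_cast Nat.lt_succ_iff.mp hω
  have hEX : ∫ ω, (X ω : ℝ) ∂μ = ∑ k ∈ Finset.range n, p k * (k : ℝ) := by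
    have := integral_comp_of_ae_lt μ X hX n hae (fun k => (k : ℝ))
    rw [this]
    refine Finset.sum_congr rfl fun k hk => ?_
    rw [hμk k (Finset.mem_range.mp hk), smul_eq_mul]
  have hEX2 : ∫ ω, ((X ω : ℝ)) ^ 2 ∂μ = ∑ k ∈ Finset.range n, p k * (k : ℝ) ^ 2 := by
    have := integral_comp_of_ae_lt μ X hX n hae (fun k => ((k : ℝ)) ^ 2)
    rw [this]
    refine Finset.sum_congr rfl fun k hk => ?_
    rw [hμk k (Finset.mem_range.mp hk), smul_eq_mul]
  have hvar : variance (fun ω => (X ω : ℝ)) μ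
      = (∑ k ∈ Finset.range n, p k * (k : ℝ) ^ 2)
        - (∑ k ∈ Finset.range n, p k * (k : ℝ)) ^ 2 := by
    rw [ProbabilityTheory.variance_eq_sub hmem]
    have h2 : (fun ω => (X ω : ℝ)) ^ 2 = fun ω => ((X ω : ℝ)) ^ 2 := by
      ext ω; simp [Pi.pow_apply]
    rw [h2, hEX2, hEX]
  -- adjacent-pair sum
  set A : ℝ := ∑ k ∈ Finset.range (n - 1), p k * p (k + 1) with hA
  have hA0 : 0 ≤ A := Finset.sum_nonneg fun k _ => mul_nonneg (hpnn k) (hpnn (k + 1))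
  have hadj : ∀ l, l < n - 1 → p l * p (l + 1) ≤ A := fun l hl =>
    Finset.single_le_sum (fun i _ => mul_nonneg (hpnn i) (hpnn (i + 1)))
      (Finset.mem_range.mpr hl)
  have hpp : ∀ j k : ℕ, p j * p k = ρ ^ (j + k) / S ^ 2 := by
    intro j k
    rw [hpdef]
    rw [div_mul_div_comm, ← pow_add, sq]
  have hpair' : ∀ j k : ℕ, j < k → k < n → p j * p k ≤ A := by
    intro j k hjk hk
    rcases le_or_gt ρ 1 with h1 | h1
    · have hpow : ρ ^ (j + k) ≤ ρ ^ (j + (j + 1)) :=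
        pow_le_pow_of_le_one hρ.le h1 (by omega)
      have h2 : p j * p k ≤ p j * p (j + 1) := by
        rw [hpp, hpp]
        exact div_le_div_of_nonneg_right hpow (by positivity) |>.trans_eq rfl
      exact h2.trans (hadj j (by omega))
    · have hpow : ρ ^ (j + k) ≤ ρ ^ ((k - 1) + k) :=
        pow_le_pow_right₀ h1.le (by omega)
      have h2 : p j * p k ≤ p (k - 1) * p k := by
        rw [hpp, hpp]
        exact div_le_div_of_nonneg_right hpow (by positivity) |>.trans_eq rfl
      have hk1 : (k - 1) + 1 = k := by omega
      have := hadj (k - 1) (by omega)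
      rw [hk1] at this
      exact h2.trans this
  have hpair : ∀ j k : ℕ, j < n → k < n → j ≠ k → p j * p k ≤ A := by
    intro j k hj hk hjk
    rcases lt_or_gt_of_ne hjk with h | h
    · exact hpair' j k h hk
    · rw [mul_comm]; exact hpair' k j h hj
  -- variance bound
  have hterm : ∀ j k : ℕ, j < n → k < n →
      p j * p k * ((j : ℝ) - k) ^ 2 ≤ (C : ℝ) ^ 2 * A := by
    intro j k hj hk
    rcases eq_or_ne j k with rfl | hjk
    · simp [sub_self]
      positivity
    · have h1 : p j * p k ≤ A := hpair j k hj hk hjk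
      have h2 : ((j : ℝ) - k) ^ 2 ≤ (C : ℝ) ^ 2 := by
        have hjC : (j : ℝ) ≤ C := by
          have : j ≤ C := by omega
          exact_mod_cast this
        have hkC : (k : ℝ) ≤ C := by
          have : k ≤ C := by omega
          exact_mod_cast this
        have hj0 : (0 : ℝ) ≤ j := Nat.cast_nonneg j
        have hk0 : (0 : ℝ) ≤ k := Nat.cast_nonneg k
        nlinarith
      calc p j * p k * ((j : ℝ) - k) ^ 2 ≤ A * (C : ℝ) ^ 2 :=
            mul_le_mul h1 h2 (sq_nonneg _) hA0
        _ = (C : ℝ) ^ 2 * A := mul_comm _ _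
  have hVA : variance (fun ω => (X ω : ℝ)) μ ≤ M * A := by
    rw [hvar, var_identity n p hpsum]
    have hinner : ∀ j ∈ Finset.range n,
        ∑ k ∈ Finset.range n, p j * p k * ((j : ℝ) - k) ^ 2
          ≤ (n : ℝ) * ((C : ℝ) ^ 2 * A) := by
      intro j hj
      calc ∑ k ∈ Finset.range n, p j * p k * ((j : ℝ) - k) ^ 2
          ≤ (Finset.range n).card • ((C : ℝ) ^ 2 * A) :=
            Finset.sum_le_card_nsmul _ _ _ fun k hk =>
              hterm j k (Finset.mem_range.mp hj) (Finset.mem_range.mp hk)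
        _ = (n : ℝ) * ((C : ℝ) ^ 2 * A) := by
            rw [Finset.card_range, nsmul_eq_mul]
    have houter : ∑ j ∈ Finset.range n, ∑ k ∈ Finset.range n,
        p j * p k * ((j : ℝ) - k) ^ 2 ≤ (n : ℝ) * ((n : ℝ) * ((C : ℝ) ^ 2 * A)) := by
      calc ∑ j ∈ Finset.range n, ∑ k ∈ Finset.range n, p j * p k * ((j : ℝ) - k) ^ 2
          ≤ (Finset.range n).card • ((n : ℝ) * ((C : ℝ) ^ 2 * A)) :=
            Finset.sum_le_card_nsmul _ _ _ hinner
        _ = (n : ℝ) * ((n : ℝ) * ((C : ℝ) ^ 2 * A)) := by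
            rw [Finset.card_range, nsmul_eq_mul]
    have hnC : (n : ℝ) ≤ (C : ℝ) + 1 := by
      have : n ≤ C + 1 := by omega
      exact_mod_cast this
    have hC2 : (0 : ℝ) ≤ (C : ℝ) ^ 2 * A := by positivity
    have hbig : (n : ℝ) * ((n : ℝ) * ((C : ℝ) ^ 2 * A))
        ≤ ((C : ℝ) + 1) * (((C : ℝ) + 1) * ((C : ℝ) ^ 2 * A)) := by
      have hn0 : (0 : ℝ) ≤ n := Nat.cast_nonneg n
      have := mul_le_mul hnC hnC hn0 (by positivity : (0:ℝ) ≤ (C:ℝ) + 1)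
      nlinarith
    have hMA : 0 ≤ M * A := mul_nonneg hMpos.le hA0
    have heq : ((C : ℝ) + 1) * (((C : ℝ) + 1) * ((C : ℝ) ^ 2 * A)) = M * A := by
      rw [hM]; ring
    linarith [houter.trans (hbig.trans_eq heq)]
  -- final chain
  rw [hint]
  set z := ∑ k ∈ Finset.range n, ((p k : ℝ) : ℂ) * Complex.exp (Complex.I * t * k) with hz
  set V := variance (fun ω => (X ω : ℝ)) μ with hV
  have hV0 : 0 ≤ V := variance_nonneg _ μ
  have habs2 : ‖z‖ ^ 2 ≤ 1 - (1 - Real.cos t) * A :=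
    charfun_sq_bound n p hpnn hpsum t
  have hcos : 2 / Real.pi ^ 2 * t ^ 2 ≤ 1 - Real.cos t := by
    have := Real.cos_le_one_sub_mul_cos_sq ht
    linarith
  have hcos0 : (0 : ℝ) ≤ 2 / Real.pi ^ 2 * t ^ 2 := by positivity
  have hVMA : V / M ≤ A := (div_le_iff₀ hMpos).mpr (by linarith [hVA])
  have hstep : 2 / Real.pi ^ 2 * t ^ 2 * (V / M) ≤ (1 - Real.cos t) * A :=
    mul_le_mul hcos hVMA (div_nonneg hV0 hMpos.le) (by linarith)
  have hkey : ‖z‖ ^ 2 ≤ Real.exp (-(2 / Real.pi ^ 2 * t ^ 2 * (V / M))) := by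
    have := Real.add_one_le_exp (-(2 / Real.pi ^ 2 * t ^ 2 * (V / M)))
    linarith
  have hexp_eq : Real.exp (-(2 / Real.pi ^ 2 * t ^ 2 * (V / M)))
      = (Real.exp (-(2 / Real.pi ^ 2) * κ * V * t ^ 2)) ^ 2 := by
    rw [← Real.exp_nat_mul]
    congr 1
    rw [hκ]
    push_cast
    field_simp
  rw [hexp_eq] at hkey
  have hz0 : 0 ≤ ‖z‖ := norm_nonneg z
  have he0 : 0 < Real.exp (-(2 / Real.pi ^ 2) * κ * V * t ^ 2) := Real.exp_pos _
  nlinarith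
end

section
/- Fix N ≥ 1, M ≥ 1, capacities c = (c_1, …, c_N) with each c_j ∈ ℕ ∪ {+∞} and Σ_j c_j ≥ M, and functions g_j : ℕ → [0,∞) with g_j(0) = 0 and g_j(k) > 0 for k ≥ 1. Let 𝒮^c_{N,M} = { n ∈ ℕ^N : Σ_j n_j = M and n_j ≤ c_j whenever c_j < +∞ }, and for m ∈ 𝒮^c_{N,M−1} let A(m) = { j : m_j < c_j } and P(m) = (p_{ij}(m))_{i,j∈A(m)} be a stochastic matrix on A(m). Consider the transition rates q(n, n − e_i + e_j) = g_i(n_i) p_{ij}(n − e_i) 1_{n_i > 0, n_j < c_j} for n ∈ 𝒮^c_{N,M} and i ≠ j (all other rates zero). Assume there is a positive vector θ = (θ_1, …, θ_N) such that for all m ∈ 𝒮^c_{N,M−1} and all j ∈ {1, …, N}, Σ_{i∈A(m)} θ_i p_{ij}(m) = θ_j. Then the probability distribution π on 𝒮^c_{N,M} defined by π(n) = Z^{-1} ∏_{j=1}^N θ_j^{n_j} / (g_j!)(n_j) (Z a normalizing constant) satisfies the global balance equations: for every n ∈ 𝒮^c_{N,M}, Σ_{i≠j, n_i>0, n_j<c_j}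 π(n) g_i(n_i) p_{ij}(n − e_i) = Σ_{i≠j, n_i>0, n_j<c_j} π(n − e_i + e_j) g_j(n_j + 1) p_{ji}(n − e_i); that is, π is invariant for this Markov jump process. -/
open scoped Classical
open Finset

/-- `(g!)(n) = ∏_{k=1}^n g(k)`, with `(g!)(0) = 1`. -/
noncomputable def gFact (g : ℕ → ℝ) (n : ℕ) : ℝ := ∏ k ∈ Finset.range n, g (k + 1)

/-- Invariance (global balance) of the product-form distribution for generalized closed
Jackson networks with finite capacities and state-dependent routing
(Theorem 3.2 of the paper). -/
theorem jackson_state_dependent_invariant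
    (N M : ℕ) (hN : 1 ≤ N) (hM : 1 ≤ M)
    (c : Fin N → ℕ∞) (hcap : (M : ℕ∞) ≤ ∑ j, c j)
    (g : Fin N → ℕ → ℝ)
    (hg0 : ∀ j, g j 0 = 0) (hgpos : ∀ j k, 1 ≤ k → 0 < g j k)
    -- state spaces with `M` and `M - 1` customers
    (S : Set (Fin N → ℕ)) (hs : S = {n | ∑ j, n j = M ∧ ∀ j, (n j : ℕ∞) ≤ c j})
    (S' : Set (Fin N → ℕ)) (hs' : S' = {n | ∑ j, n j = M - 1 ∧ ∀ j, (n j : ℕ∞) ≤ c j})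
    -- the state-dependent routing matrices `P(m)`, stochastic on `A(m) = {j | m j < c j}`
    (p : (Fin N → ℕ) → Fin N → Fin N → ℝ)
    (hp_nonneg : ∀ m ∈ S', ∀ i j, 0 ≤ p m i j)
    (hp_row : ∀ m ∈ S', ∀ i, ((m i : ℕ∞) < c i) →
      ∑ j ∈ Finset.univ.filter (fun j => (m j : ℕ∞) < c j), p m i j = 1)
    -- a positive vector `θ`, invariant for every matrix `P(m)`
    (θ : Fin N → ℝ) (hθ : ∀ j, 0 < θ j)
    (hinv : ∀ m ∈ S', ∀ j,
      ∑ i ∈ Finset.univ.filter (fun i => (m i : ℕ∞) < c i), θ i * p m i j = θ j)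
    -- the product-form distribution `π`
    (Z : ℝ) (hZ : Z = ∑' n : Fin N → ℕ,
      if n ∈ S then ∏ j, θ j ^ n j / gFact (g j) (n j) else 0)
    (π : (Fin N → ℕ) → ℝ)
    (hπ : ∀ n, π n = (∏ j, θ j ^ n j / gFact (g j) (n j)) / Z) :
    -- global balance equations
    ∀ n ∈ S,
      (∑ i, ∑ j, if i ≠ j ∧ 0 < n i ∧ (n j : ℕ∞) < c j then
          π n * g i (n i) * p (Function.update n i (n i - 1)) i j else 0)
      = ∑ i, ∑ j, if i ≠ j ∧ 0 < n i ∧ (n j : ℕ∞) < c j then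
          π (fun x => if x = i then n i - 1 else if x = j then n j + 1 else n x)
            * g j (n j + 1) * p (Function.update n i (n i - 1)) j i else 0 := by
  subst hs hs'
  intro n hn
  obtain ⟨hsum, hle⟩ := hn
  have hgFact : ∀ j k, 0 < gFact (g j) k := fun j k =>
    Finset.prod_pos (fun x _ => hgpos j (x + 1) (Nat.succ_le_succ (Nat.zero_le x)))
  refine Finset.sum_congr rfl (fun i _ => ?_)
  by_cases hni : 0 < n i
  swap
  · refine Finset.sum_congr rfl (fun j _ => ?_)
    simp [hni]
  set m := Function.update n i (n i - 1) with hm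
  have hmi : m i = n i - 1 := Function.update_self _ _ _
  have hmj : ∀ j, j ≠ i → m j = n j := fun j hj => Function.update_of_ne hj _ _
  have hniM : n i ≤ M := hsum ▸ Finset.single_le_sum (fun k _ => Nat.zero_le _) (Finset.mem_univ i)
  have hmS' : m ∈ {v : Fin N → ℕ | ∑ j, v j = M - 1 ∧ ∀ j, (v j : ℕ∞) ≤ c j} := by
    constructor
    · rw [hm, Finset.sum_update_of_mem (Finset.mem_univ i)]
      have h2 : n i + ∑ j ∈ Finset.univ.erase i, n j = M := by
        rw [Finset.add_sum_erase Finset.univ n (Finset.mem_univ i)]; exact hsum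
      rw [Finset.erase_eq] at h2
      omega
    · intro j
      by_cases hji : j = i
      · subst hji
        rw [hmi]
        exact le_trans (by exact_mod_cast Nat.sub_le (n j) 1) (hle j)
      · rw [hmj j hji]; exact hle j
  have hmiA : (m i : ℕ∞) < c i := by
    refine lt_of_lt_of_le ?_ (hle i)
    exact_mod_cast hmi ▸ Nat.sub_lt hni one_pos
  -- key term identity
  have hkey : ∀ j, i ≠ j → (n j : ℕ∞) < c j →
      π (fun x => if x = i then n i - 1 else if x = j then n j + 1 else n x) * g j (n j + 1)
        = π n * g i (n i) * (θ j / θ i) := by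
    intro j hij hcj
    have hij' : j ≠ i := Ne.symm hij
    set n' : Fin N → ℕ := fun x => if x = i then n i - 1 else if x = j then n j + 1 else n x with hn'
    have hsplit : ∀ (v : Fin N → ℕ),
        ∏ k, θ k ^ v k / gFact (g k) (v k)
          = (θ i ^ v i / gFact (g i) (v i)) * ((θ j ^ v j / gFact (g j) (v j)) *
            ∏ k ∈ (Finset.univ.erase i).erase j, θ k ^ v k / gFact (g k) (v k)) := by
      intro v
      have e1 := Finset.mul_prod_erase (Finset.univ.erase i)
        (fun k => θ k ^ v k / gFact (g k) (v k))
        (Finset.mem_erase.2 ⟨hij', Finset.mem_univ j⟩)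
      have e2 := Finset.mul_prod_erase Finset.univ
        (fun k => θ k ^ v k / gFact (g k) (v k)) (Finset.mem_univ i)
      rw [← e2, ← e1]
    have hrest : ∏ k ∈ (Finset.univ.erase i).erase j, θ k ^ n' k / gFact (g k) (n' k)
        = ∏ k ∈ (Finset.univ.erase i).erase j, θ k ^ n k / gFact (g k) (n k) := by
      refine Finset.prod_congr rfl (fun k hk => ?_)
      have hkj : k ≠ j := (Finset.mem_erase.1 hk).1
      have hki : k ≠ i := (Finset.mem_erase.1 (Finset.mem_erase.1 hk).2).1
      simp [hn', hki, hkj]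
    have hn'i : n' i = n i - 1 := by simp [hn']
    have hn'j : n' j = n j + 1 := by simp [hn', hij']
    -- scalar identity
    obtain ⟨a, ha⟩ : ∃ a, n i = a + 1 := ⟨n i - 1, by omega⟩
    have hgi : gFact (g i) (n i) = gFact (g i) (n i - 1) * g i (n i) := by
      rw [ha]; simp [gFact, Finset.prod_range_succ]
    have hgj : gFact (g j) (n j + 1) = gFact (g j) (n j) * g j (n j + 1) := by
      simp [gFact, Finset.prod_range_succ]
    have hti : θ i ^ n i = θ i ^ (n i - 1) * θ i := by
      rw [ha, Nat.add_sub_cancel, pow_succ]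
    have hscalar : (θ i ^ n' i / gFact (g i) (n' i)) * (θ j ^ n' j / gFact (g j) (n' j))
          * g j (n j + 1)
        = (θ i ^ n i / gFact (g i) (n i)) * (θ j ^ n j / gFact (g j) (n j))
          * (g i (n i) * (θ j / θ i)) := by
      rw [hn'i, hn'j, hgj, hgi, hti]
      have h1 := (hgFact i (n i - 1)).ne'
      have h2 := (hgFact j (n j)).ne'
      have h3 := (hgpos i (n i) hni).ne'
      have h4 := (hgpos j (n j + 1) (Nat.le_add_left 1 (n j))).ne'
      have h5 := (hθ i).ne'
      field_simp
      ring
    rw [hπ, hπ, hsplit n', hsplit n, hrest]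
    set R := ∏ k ∈ (Finset.univ.erase i).erase j, θ k ^ n k / gFact (g k) (n k) with hR
    calc (θ i ^ n' i / gFact (g i) (n' i)) * ((θ j ^ n' j / gFact (g j) (n' j)) * R) / Z
          * g j (n j + 1)
        = ((θ i ^ n' i / gFact (g i) (n' i)) * (θ j ^ n' j / gFact (g j) (n' j))
            * g j (n j + 1)) * R / Z := by ring
      _ = ((θ i ^ n i / gFact (g i) (n i)) * (θ j ^ n j / gFact (g j) (n j))
            * (g i (n i) * (θ j / θ i))) * R / Z := by rw [hscalar]
      _ = (θ i ^ n i / gFact (g i) (n i)) * ((θ j ^ n j / gFact (g j) (n j)) * R) / Z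
            * g i (n i) * (θ j / θ i) := by ring
  -- rewrite RHS terms
  have hR : ∀ j, (if i ≠ j ∧ 0 < n i ∧ (n j : ℕ∞) < c j then
      π (fun x => if x = i then n i - 1 else if x = j then n j + 1 else n x)
        * g j (n j + 1) * p m j i else 0)
      = (if i ≠ j ∧ 0 < n i ∧ (n j : ℕ∞) < c j then
          π n * g i (n i) * (θ j / θ i * p m j i) else 0) := by
    intro j
    by_cases hc : i ≠ j ∧ 0 < n i ∧ (n j : ℕ∞) < c j
    · rw [if_pos hc, if_pos hc, hkey j hc.1 hc.2.2]; ring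
    · rw [if_neg hc, if_neg hc]
  simp only [hR]
  -- convert to sums over the filter set
  set A := Finset.univ.filter (fun j => (m j : ℕ∞) < c j) with hA
  have hiA : i ∈ A := Finset.mem_filter.2 ⟨Finset.mem_univ i, hmiA⟩
  have hset : ∀ (f : Fin N → ℝ),
      (∑ j, if i ≠ j ∧ 0 < n i ∧ (n j : ℕ∞) < c j then f j else 0)
        = ∑ j ∈ A.erase i, f j := by
    intro f
    rw [← Finset.sum_filter]
    congr 1
    ext j
    simp only [Finset.mem_filter, Finset.mem_univ, true_and, Finset.mem_erase, hA]
    constructor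
    · rintro ⟨h1, -, h3⟩
      exact ⟨Ne.symm h1, by rwa [hmj j (Ne.symm h1)]⟩
    · rintro ⟨h1, h2⟩
      exact ⟨Ne.symm h1, hni, by rwa [← hmj j h1]⟩
  rw [hset, hset]
  have hrow : ∑ j ∈ A.erase i, p m i j = 1 - p m i i := by
    have := hp_row m hmS' i hmiA
    rw [← Finset.add_sum_erase A (p m i) hiA] at this
    linarith
  have hinv' : ∑ j ∈ A.erase i, θ j * p m j i = θ i - θ i * p m i i := by
    have := hinv m hmS' i
    rw [← Finset.add_sum_erase A (fun k => θ k * p m k i) hiA] at this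
    linarith
  have hθi := (hθ i).ne'
  calc ∑ j ∈ A.erase i, π n * g i (n i) * p m i j
      = π n * g i (n i) * ∑ j ∈ A.erase i, p m i j := by rw [Finset.mul_sum]
    _ = π n * g i (n i) * ((∑ j ∈ A.erase i, θ j * p m j i) / θ i) := by
        rw [hrow, hinv']; field_simp
    _ = ∑ j ∈ A.erase i, π n * g i (n i) * (θ j / θ i * p m j i) := by
        rw [Finset.sum_div, Finset.mul_sum]
        refine Finset.sum_congr rfl (fun j _ => ?_)
        ring
end

section
/- Let φ : ℕ → [0,∞) be a nonnegative function that is nonzero at at least two points, let Z(γ) = Σ_{n=0}^∞ γ^n φ(n) with radius of convergence γ* > 0, and for 0 < γ < γ* let X^γ be a random variable with P(X^γ = n) = γ^n φ(n) / Z(γ) for n ∈ ℕ. Then E(X^γ) < +∞ for all γ ∈ (0, γ*), and the mapping γ ↦ E(X^γ) is strictly increasing on (0, γ*). -/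
open Filter
open scoped ENNReal

set_option maxHeartbeats 1000000

private lemma key_ineq (a : ℕ → ℝ) (ha : ∀ n, 0 ≤ a n)
    (n0 m0 : ℕ) (hnm : n0 ≠ m0) (hn0 : a n0 ≠ 0) (hm0 : a m0 ≠ 0)
    (x y : ℝ) (hx : 0 < x) (hxy : x < y)
    (hsx : Summable (fun n : ℕ => x ^ n * a n))
    (hsy : Summable (fun n : ℕ => y ^ n * a n))
    (hmx : Summable (fun n : ℕ => (n : ℝ) * (x ^ n * a n)))
    (hmy : Summable (fun n : ℕ => (n : ℝ) * (y ^ n * a n))) :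
    (∑' n : ℕ, (n : ℝ) * (x ^ n * a n)) * (∑' n : ℕ, y ^ n * a n)
      < (∑' n : ℕ, (n : ℝ) * (y ^ n * a n)) * (∑' n : ℕ, x ^ n * a n) := by
  have hy : 0 < y := hx.trans hxy
  -- product summabilities
  have hF : Summable (fun p : ℕ × ℕ => ((p.1 : ℝ) * (x ^ p.1 * a p.1)) * (y ^ p.2 * a p.2)) :=
    Summable.mul_of_nonneg hmx hsy
      (fun n => mul_nonneg (Nat.cast_nonneg n) (mul_nonneg (pow_nonneg hx.le n) (ha n)))
      (fun n => mul_nonneg (pow_nonneg hy.le n) (ha n))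
  have hG : Summable (fun p : ℕ × ℕ => ((p.1 : ℝ) * (y ^ p.1 * a p.1)) * (x ^ p.2 * a p.2)) :=
    Summable.mul_of_nonneg hmy hsx
      (fun n => mul_nonneg (Nat.cast_nonneg n) (mul_nonneg (pow_nonneg hy.le n) (ha n)))
      (fun n => mul_nonneg (pow_nonneg hx.le n) (ha n))
  have hFeq := Summable.tsum_mul_tsum hmx hsy hF
  have hGeq := Summable.tsum_mul_tsum hmy hsx hG
  rw [hFeq, hGeq]
  -- D p = G p - F p
  set F : ℕ × ℕ → ℝ := fun p => ((p.1 : ℝ) * (x ^ p.1 * a p.1)) * (y ^ p.2 * a p.2) with hFdef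
  set G : ℕ × ℕ → ℝ := fun p => ((p.1 : ℝ) * (y ^ p.1 * a p.1)) * (x ^ p.2 * a p.2) with hGdef
  have hD : Summable (fun p => G p - F p) := hG.sub hF
  have hswap : Summable (fun p : ℕ × ℕ => G p.swap - F p.swap) :=
    ((Equiv.prodComm ℕ ℕ).summable_iff).2 hD
  have hH : Summable (fun p : ℕ × ℕ => (G p - F p) + (G p.swap - F p.swap)) := hD.add hswap
  -- H is nonneg
  have hfact : ∀ p : ℕ × ℕ, (G p - F p) + (G p.swap - F p.swap)
      = ((p.1 : ℝ) - p.2) * (a p.1 * a p.2) * (y ^ p.1 * x ^ p.2 - x ^ p.1 * y ^ p.2) := by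
    intro ⟨n, m⟩
    simp only [hFdef, hGdef, Prod.swap]
    ring
  have hle : ∀ n m : ℕ, m ≤ n →
      0 ≤ ((n : ℝ) - m) * (a n * a m) * (y ^ n * x ^ m - x ^ n * y ^ m) := by
    intro n m hmn
    obtain ⟨k, rfl⟩ := Nat.exists_eq_add_of_le hmn
    apply mul_nonneg
    · apply mul_nonneg
      · simp
      · exact mul_nonneg (ha _) (ha _)
    · have : y ^ (m + k) * x ^ m - x ^ (m + k) * y ^ m
          = (x ^ m * y ^ m) * (y ^ k - x ^ k) := by ring
      rw [this]
      exact mul_nonneg (mul_nonneg (pow_nonneg hx.le m) (pow_nonneg hy.le m))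
        (sub_nonneg.2 (pow_le_pow_left₀ hx.le hxy.le k))
  have hHnonneg : ∀ p : ℕ × ℕ, 0 ≤ (G p - F p) + (G p.swap - F p.swap) := by
    intro ⟨n, m⟩
    rw [hfact]
    rcases le_total m n with h | h
    · exact hle n m h
    · have := hle m n h
      simpa using le_of_le_of_eq this (by ring)
  -- H is positive somewhere
  have hlt : ∀ n m : ℕ, m < n → a n ≠ 0 → a m ≠ 0 →
      0 < ((n : ℝ) - m) * (a n * a m) * (y ^ n * x ^ m - x ^ n * y ^ m) := by
    intro n m hmn hn hm
    obtain ⟨k, rfl⟩ := Nat.exists_eq_add_of_lt hmn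
    apply mul_pos
    · apply mul_pos
      · have : (m : ℝ) < (m + k + 1 : ℕ) := by push_cast; linarith
        linarith
      · exact mul_pos ((ha _).lt_of_ne' hn) ((ha _).lt_of_ne' hm)
    · have : y ^ (m + k + 1) * x ^ m - x ^ (m + k + 1) * y ^ m
          = (x ^ m * y ^ m) * (y ^ (k + 1) - x ^ (k + 1)) := by ring
      rw [this]
      exact mul_pos (mul_pos (pow_pos hx m) (pow_pos hy m))
        (sub_pos.2 (pow_lt_pow_left₀ hxy hx.le (Nat.succ_ne_zero k)))
  have hHpos : ∃ p : ℕ × ℕ, 0 < (G p - F p) + (G p.swap - F p.swap) := by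
    rcases lt_or_gt_of_ne hnm with h | h
    · exact ⟨(m0, n0), by rw [hfact]; exact hlt m0 n0 h hm0 hn0⟩
    · exact ⟨(n0, m0), by rw [hfact]; exact hlt n0 m0 h hn0 hm0⟩
  obtain ⟨p0, hp0⟩ := hHpos
  have hHsum : 0 < ∑' p : ℕ × ℕ, ((G p - F p) + (G p.swap - F p.swap)) :=
    Summable.tsum_pos hH hHnonneg p0 hp0
  have h1 : ∑' p : ℕ × ℕ, (G p.swap - F p.swap) = ∑' p, (G p - F p) :=
    (Equiv.prodComm ℕ ℕ).tsum_eq (fun p => G p - F p)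
  rw [Summable.tsum_add hD hswap, h1, Summable.tsum_sub hG hF] at hHsum
  have : 0 < ∑' p, G p - ∑' p, F p := by linarith
  linarith
/-- Lemma 4.1 of the paper: for `P(X^γ = n) = γ^n φ(n) / Z(γ)` with
`Z(γ) = ∑_n γ^n φ(n)` of radius of convergence `γ* > 0` and `φ ≥ 0` nonzero at at least
two points, the mean `E(X^γ) = (∑_n n γ^n φ(n)) / Z(γ)` is finite for every
`γ ∈ (0, γ*)` and is strictly increasing in `γ` on `(0, γ*)`. -/
theorem mean_strictMono_of_power_series_family
    (φ : ℕ → ℝ) (hφ : ∀ n, 0 ≤ φ n)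
    (htwo : ∃ n m : ℕ, n ≠ m ∧ φ n ≠ 0 ∧ φ m ≠ 0)
    (γstar : ℝ≥0∞) (hγstar : 0 < γstar)
    -- `γ*` is the radius of convergence of `Z(γ) = ∑ γ^n φ(n)`
    (hconv : ∀ γ : ℝ, 0 < γ → ENNReal.ofReal γ < γstar → Summable (fun n : ℕ => γ ^ n * φ n))
    (hdiv : ∀ γ : ℝ, γstar < ENNReal.ofReal γ → ¬ Summable (fun n : ℕ => γ ^ n * φ n)) :
    -- the mean is finite on `(0, γ*)` …
    (∀ γ : ℝ, 0 < γ → ENNReal.ofReal γ < γstar →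
      Summable (fun n : ℕ => (n : ℝ) * (γ ^ n * φ n)))
    -- … and `γ ↦ E(X^γ)` is strictly increasing on `(0, γ*)`
    ∧ StrictMonoOn
        (fun γ : ℝ => (∑' n : ℕ, (n : ℝ) * (γ ^ n * φ n)) / ∑' n : ℕ, γ ^ n * φ n)
        {γ : ℝ | 0 < γ ∧ ENNReal.ofReal γ < γstar} := by
  have hmom : ∀ γ : ℝ, 0 < γ → ENNReal.ofReal γ < γstar →
      Summable (fun n : ℕ => (n : ℝ) * (γ ^ n * φ n)) := by
    intro γ hγ hγlt
    obtain ⟨c, hc1, hc2⟩ := exists_between hγlt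
    have hcfin : c ≠ ⊤ := (hc2.trans_le le_top).ne
    set δ := c.toReal with hδ
    have hγδ : γ < δ := by
      have := (ENNReal.toReal_lt_toReal ENNReal.ofReal_ne_top hcfin).2 hc1
      rwa [ENNReal.toReal_ofReal hγ.le] at this
    have hδpos : 0 < δ := hγ.trans hγδ
    have hδlt : ENNReal.ofReal δ < γstar := by
      rwa [hδ, ENNReal.ofReal_toReal hcfin]
    have hsδ : Summable (fun n : ℕ => δ ^ n * φ n) := hconv δ hδpos hδlt
    set r := γ / δ with hr
    have hr0 : 0 ≤ r := div_nonneg hγ.le hδpos.le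
    have hr1 : r < 1 := (div_lt_one hδpos).2 hγδ
    have htend : Tendsto (fun n : ℕ => (n : ℝ) * r ^ n) atTop (nhds 0) := by
      simpa using tendsto_self_mul_const_pow_of_lt_one hr0 hr1
    obtain ⟨C, hC⟩ := htend.bddAbove_range
    refine Summable.of_nonneg_of_le
      (fun n => mul_nonneg (Nat.cast_nonneg n) (mul_nonneg (pow_nonneg hγ.le n) (hφ n)))
      (fun n => ?_) (hsδ.mul_left C)
    have hγn : γ ^ n = r ^ n * δ ^ n := by
      rw [hr, div_pow, div_mul_cancel₀]
      exact pow_ne_zero n hδpos.ne'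
    have hnr : (n : ℝ) * r ^ n ≤ C := hC ⟨n, rfl⟩
    calc (n : ℝ) * (γ ^ n * φ n) = ((n : ℝ) * r ^ n) * (δ ^ n * φ n) := by
          rw [hγn]; ring
      _ ≤ C * (δ ^ n * φ n) :=
          mul_le_mul_of_nonneg_right hnr (mul_nonneg (pow_nonneg hδpos.le n) (hφ n))
  refine ⟨hmom, ?_⟩
  intro x hx y hy hxy
  obtain ⟨hx0, hxlt⟩ := hx
  obtain ⟨hy0, hylt⟩ := hy
  obtain ⟨n0, m0, hnm, hn0, hm0⟩ := htwo
  have hsx := hconv x hx0 hxlt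
  have hsy := hconv y hy0 hylt
  have hmx := hmom x hx0 hxlt
  have hmy := hmom y hy0 hylt
  have hZx : 0 < ∑' n : ℕ, x ^ n * φ n :=
    Summable.tsum_pos hsx (fun n => mul_nonneg (pow_nonneg hx0.le n) (hφ n)) n0
      (mul_pos (pow_pos hx0 n0) ((hφ n0).lt_of_ne' hn0))
  have hZy : 0 < ∑' n : ℕ, y ^ n * φ n :=
    Summable.tsum_pos hsy (fun n => mul_nonneg (pow_nonneg hy0.le n) (hφ n)) n0
      (mul_pos (pow_pos hy0 n0) ((hφ n0).lt_of_ne' hn0))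
  simp only
  rw [div_lt_div_iff₀ hZx hZy]
  exact key_ineq φ hφ n0 m0 hnm hn0 hm0 x y hx0 hxy hsx hsy hmx hmy
end

section
/- Let 𝒥₁ be a finite set of stations with finite capacities c_j, 𝒥₂ ⊆ {[ij] : i ≠ j ∈ 𝒥₁} a set of routes (with infinite capacity), Q = (q_{ij}) an irreducible stochastic matrix on 𝒥₁ with invariant distribution ν, and μ_a > 0 (a ∈ 𝒥₁ ∪ 𝒥₂) service rates. Consider the Markov jump process on 𝒮^c_{N,M} = { n ∈ ℕ^{𝒥₁∪𝒥₂} : Σ_a n_a = M, n_j ≤ c_j for j ∈ 𝒥₁ } with transitions n → n − e_i + e_{[ij]} at rate μ_i q_{ij} 1_{n_i > 0}; n → n − e_{[ij]} + e_j at rate μ_{[ij]} n_{[ij]} 1_{n_j < c_j}; and n → n − e_{[ij]} + e_{[jk]} at rate μ_{[ij]} n_{[ij]} w^{(j)}_{ik}(n − e_{[ij]}) 1_{n_j = c_j, n_{[ij]} > 0}, where for each j ∈ 𝒥₁ and each m ∈ 𝒮^c_{N,M−1}, W^{(j)}(m) = (w^{(j)}_{ik}(m))_{i,k ∈ 𝒥₁∖{j}}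 is a stochastic matrix. If for each j all the matrices W^{(j)}(m) satisfy ν_j q_{jk} = Σ_{i ∈ 𝒥₁∖{j}} ν_i q_{ij} w^{(j)}_{ik}(m) for every k ≠ j, then the distribution π(n) = Z^{-1} ∏_{j∈𝒥₁} r_j^{n_j} ∏_{[ij]∈𝒥₂} r_{[ij]}^{n_{[ij]}}/n_{[ij]}!, with r_j = ν_j/(2μ_j) and r_{[ij]} = ν_i q_{ij}/(2μ_{[ij]}), satisfies the global balance equations of this process on 𝒮^c_{N,M}, i.e. it is a stationary distribution. -/
set_option linter.unusedSectionVars false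
set_option linter.unusedVariables false
set_option maxHeartbeats 4000000


open scoped Classical
open Finset

/-- Iterates of a matrix on `Fin I`, used to express irreducibility. -/
noncomputable def finMatPow {I : ℕ} (q : Fin I → Fin I → ℝ) : ℕ → Fin I → Fin I → ℝ
  | 0, i, j => if i = j then 1 else 0
  | k + 1, i, j => ∑ l, finMatPow q k i l * q l j

/-- The state obtained from `n` by moving one customer from node `a` to node `b`. -/
noncomputable def moveNode {α : Type*} (n : α → ℕ) (a b : α) : α → ℕ :=
  fun x => if x = a then n a - 1 else if x = b then n b + 1 else n x

section Aux

variable {α : Type*} [Fintype α] [DecidableEq α]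

lemma moveNode_apply_fst (n : α → ℕ) (a b : α) : moveNode n a b a = n a - 1 := by
  simp [moveNode]

lemma moveNode_apply_snd (n : α → ℕ) (a b : α) (hab : a ≠ b) :
    moveNode n a b b = n b + 1 := by
  simp [moveNode, hab.symm]

lemma moveNode_apply_other (n : α → ℕ) (a b c : α) (hca : c ≠ a) (hcb : c ≠ b) :
    moveNode n a b c = n c := by
  simp [moveNode, hca, hcb]

lemma moveNode_ne (n : α → ℕ) (a b : α) (hab : a ≠ b) (ha : 0 < n a) :
    moveNode n a b ≠ n := by
  intro h
  have := congrFun h a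
  rw [moveNode_apply_fst] at this
  omega

lemma moveNode_invol (n : α → ℕ) (a b : α) (hab : a ≠ b) (ha : 0 < n a) :
    moveNode (moveNode n a b) b a = n := by
  funext c
  rcases eq_or_ne c a with rfl | hca
  · rw [moveNode_apply_snd _ _ _ hab.symm, moveNode_apply_fst]
    omega
  · rcases eq_or_ne c b with rfl | hcb
    · rw [moveNode_apply_fst, moveNode_apply_snd _ _ _ hab]
      omega
    · rw [moveNode_apply_other _ _ _ _ hcb hca, moveNode_apply_other _ _ _ _ hca hcb]

lemma sum_eq_add_add (f : α → ℕ) (a b : α) (hab : a ≠ b) :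
    ∑ c, f c = f a + f b + ∑ c ∈ (univ.erase a).erase b, f c := by
  rw [← Finset.add_sum_erase univ f (mem_univ a),
    ← Finset.add_sum_erase (univ.erase a) f (Finset.mem_erase.2 ⟨hab.symm, mem_univ b⟩)]
  ring

lemma prod_eq_mul_mul (f : α → ℝ) (a b : α) (hab : a ≠ b) :
    ∏ c, f c = f a * f b * ∏ c ∈ (univ.erase a).erase b, f c := by
  rw [← Finset.mul_prod_erase univ f (mem_univ a),
    ← Finset.mul_prod_erase (univ.erase a) f (Finset.mem_erase.2 ⟨hab.symm, mem_univ b⟩)]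
  ring

lemma sum_moveNode_pos (n : α → ℕ) (a b : α) (hab : a ≠ b) (ha : 0 < n a) :
    ∑ c, moveNode n a b c = ∑ c, n c := by
  rw [sum_eq_add_add (moveNode n a b) a b hab, sum_eq_add_add n a b hab,
    moveNode_apply_fst, moveNode_apply_snd _ _ _ hab,
    Finset.sum_congr rfl (fun c hc => moveNode_apply_other n a b c
      (Finset.ne_of_mem_erase (Finset.mem_of_mem_erase hc)) (Finset.ne_of_mem_erase hc)),
    show (((univ.erase a).erase b).sum n : ℕ) = ∑ c ∈ (univ.erase a).erase b, n c from rfl]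
  omega

lemma sum_moveNode_zero (n : α → ℕ) (a b : α) (hab : a ≠ b) (ha : n a = 0) :
    ∑ c, moveNode n a b c = (∑ c, n c) + 1 := by
  rw [sum_eq_add_add (moveNode n a b) a b hab, sum_eq_add_add n a b hab,
    moveNode_apply_fst, moveNode_apply_snd _ _ _ hab,
    Finset.sum_congr rfl (fun c hc => moveNode_apply_other n a b c
      (Finset.ne_of_mem_erase (Finset.mem_of_mem_erase hc)) (Finset.ne_of_mem_erase hc)),
    show (((univ.erase a).erase b).sum n : ℕ) = ∑ c ∈ (univ.erase a).erase b, n c from rfl]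
  omega


lemma moveNode_self_zero (n : α → ℕ) (a : α) (h0 : n a = 0) : moveNode n a a = n := by
  funext c
  rcases eq_or_ne c a with rfl | hc
  · simp [moveNode, h0]
  · simp [moveNode, hc]

lemma sum_moveNode_self (n : α → ℕ) (a : α) (ha : 0 < n a) :
    (∑ c, moveNode n a a c) + 1 = ∑ c, n c := by
  rw [← Finset.add_sum_erase univ (moveNode n a a) (mem_univ a),
    ← Finset.add_sum_erase univ n (mem_univ a), moveNode_apply_fst,
    Finset.sum_congr rfl (fun c hc => moveNode_apply_other n a a c
      (Finset.ne_of_mem_erase hc) (Finset.ne_of_mem_erase hc)),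
    show ((univ.erase a).sum n : ℕ) = ∑ c ∈ univ.erase a, n c from rfl]
  omega

end Aux

section Nu

variable {I : ℕ} (q : Fin I → Fin I → ℝ) (ν : Fin I → ℝ)

lemma finMatPow_nonneg (hq0 : ∀ i j, 0 ≤ q i j) :
    ∀ k i j, 0 ≤ finMatPow q k i j := by
  intro k
  induction k with
  | zero => intro i j; simp only [finMatPow]; split <;> norm_num
  | succ k ih =>
    intro i j
    exact Finset.sum_nonneg fun l _ => mul_nonneg (ih i l) (hq0 l j)

lemma finMatPow_inv (hνinv : ∀ j, ∑ i, ν i * q i j = ν j) :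
    ∀ k j, ∑ i, ν i * finMatPow q k i j = ν j := by
  intro k
  induction k with
  | zero =>
    intro j
    simp only [finMatPow, mul_ite, mul_one, mul_zero]
    rw [Finset.sum_ite_eq' univ j ν]
    simp
  | succ k ih =>
    intro j
    simp only [finMatPow, Finset.mul_sum]
    rw [Finset.sum_comm]
    calc ∑ l, ∑ i, ν i * (finMatPow q k i l * q l j)
        = ∑ l, (∑ i, ν i * finMatPow q k i l) * q l j := by
          refine Finset.sum_congr rfl fun l _ => ?_
          rw [Finset.sum_mul]; exact Finset.sum_congr rfl fun i _ => by ring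
      _ = ∑ l, ν l * q l j := by
          refine Finset.sum_congr rfl fun l _ => by rw [ih l]
      _ = ν j := hνinv j

lemma nu_pos (hq0 : ∀ i j, 0 ≤ q i j)
    (hirr : ∀ i j, ∃ k : ℕ, 0 < finMatPow q k i j)
    (hν0 : ∀ j, 0 ≤ ν j) (hνsum : ∑ j, ν j = 1)
    (hνinv : ∀ j, ∑ i, ν i * q i j = ν j) : ∀ j, 0 < ν j := by
  obtain ⟨i₀, hi₀⟩ : ∃ i₀, 0 < ν i₀ := by
    by_contra h
    push_neg at h
    have : ∀ j ∈ (univ : Finset (Fin I)), ν j = 0 :=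
      fun j _ => le_antisymm (h j) (hν0 j)
    rw [Finset.sum_congr rfl this] at hνsum
    simp at hνsum
  intro j
  obtain ⟨k, hk⟩ := hirr i₀ j
  have h1 : ν i₀ * finMatPow q k i₀ j ≤ ∑ i, ν i * finMatPow q k i j :=
    Finset.single_le_sum
      (fun i _ => mul_nonneg (hν0 i) (finMatPow_nonneg q hq0 k i j)) (mem_univ i₀)
  rw [finMatPow_inv q ν hνinv k j] at h1
  exact lt_of_lt_of_le (mul_pos hi₀ hk) h1

end Nu

section GF

variable {I : ℕ} (rS : Fin I → ℝ) (rR : Fin I × Fin I → ℝ)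

noncomputable def gco : (Fin I ⊕ Fin I × Fin I) → ℕ → ℝ
  | .inl j, m => rS j ^ m
  | .inr p, m => rR p ^ m / (Nat.factorial m)

noncomputable def Gf (n : (Fin I ⊕ Fin I × Fin I) → ℕ) : ℝ :=
  ∏ c, gco rS rR c (n c)

lemma Gf_eq (n : (Fin I ⊕ Fin I × Fin I) → ℕ) :
    Gf rS rR n = (∏ j, rS j ^ n (.inl j))
      * ∏ p, rR p ^ n (.inr p) / (Nat.factorial (n (.inr p))) := by
  rw [Gf, Fintype.prod_sum_type]; rfl

lemma Gf_zero (n : (Fin I ⊕ Fin I × Fin I) → ℕ) (p : Fin I × Fin I)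
    (hp : rR p = 0) (hy : 1 ≤ n (.inr p)) : Gf rS rR n = 0 := by
  refine Finset.prod_eq_zero (mem_univ (Sum.inr p)) ?_
  show rR p ^ n (.inr p) / (Nat.factorial (n (.inr p))) = 0
  rw [hp, zero_pow (by omega)]
  simp

lemma Gf_move (n : (Fin I ⊕ Fin I × Fin I) → ℕ) (a b : Fin I ⊕ Fin I × Fin I)
    (hab : a ≠ b) :
    Gf rS rR (moveNode n a b)
      = gco rS rR a (n a - 1) * gco rS rR b (n b + 1)
        * ∏ c ∈ (univ.erase a).erase b, gco rS rR c (n c) := by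
  rw [Gf, prod_eq_mul_mul _ a b hab, moveNode_apply_fst, moveNode_apply_snd _ _ _ hab]
  congr 1
  refine Finset.prod_congr rfl fun c hc => ?_
  rw [moveNode_apply_other n a b c
    (Finset.ne_of_mem_erase (Finset.mem_of_mem_erase hc)) (Finset.ne_of_mem_erase hc)]

lemma Gf_base (n : (Fin I ⊕ Fin I × Fin I) → ℕ) (a b : Fin I ⊕ Fin I × Fin I)
    (hab : a ≠ b) :
    Gf rS rR n = gco rS rR a (n a) * gco rS rR b (n b)
        * ∏ c ∈ (univ.erase a).erase b, gco rS rR c (n c) :=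
  prod_eq_mul_mul _ a b hab

lemma Gf_move_rt_st (n : (Fin I ⊕ Fin I × Fin I) → ℕ) (p : Fin I × Fin I) (i : Fin I)
    (hy : 1 ≤ n (.inr p)) :
    Gf rS rR (moveNode n (.inr p) (.inl i)) * rR p
      = Gf rS rR n * (n (.inr p) : ℝ) * rS i := by
  have hab : (Sum.inr p : Fin I ⊕ Fin I × Fin I) ≠ .inl i := by simp
  rw [Gf_move _ _ _ _ _ hab, Gf_base _ _ n _ _ hab]
  obtain ⟨t, ht⟩ : ∃ t, n (.inr p) = t + 1 := ⟨n (.inr p) - 1, by omega⟩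
  simp only [gco, ht]
  have h1 : ((Nat.factorial t : ℕ) : ℝ) ≠ 0 := Nat.cast_ne_zero.2 (Nat.factorial_ne_zero t)
  rw [Nat.factorial_succ]
  push_cast
  field_simp
  ring

lemma Gf_move_st_rt (n : (Fin I ⊕ Fin I × Fin I) → ℕ) (j : Fin I) (p : Fin I × Fin I)
    (hx : 1 ≤ n (.inl j)) :
    Gf rS rR (moveNode n (.inl j) (.inr p)) * rS j * ((n (.inr p) : ℝ) + 1)
      = Gf rS rR n * rR p := by
  have hab : (Sum.inl j : Fin I ⊕ Fin I × Fin I) ≠ .inr p := by simp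
  rw [Gf_move _ _ _ _ _ hab, Gf_base _ _ n _ _ hab]
  obtain ⟨t, ht⟩ : ∃ t, n (.inl j) = t + 1 := ⟨n (.inl j) - 1, by omega⟩
  simp only [gco, ht]
  have h1 : ((n (.inr p)).factorial : ℝ) ≠ 0 := Nat.cast_ne_zero.2 (Nat.factorial_ne_zero _)
  rw [Nat.factorial_succ]
  push_cast
  field_simp
  ring

lemma Gf_move_rt_rt (n : (Fin I ⊕ Fin I × Fin I) → ℕ) (p p' : Fin I × Fin I)
    (hpp : p ≠ p') (hy : 1 ≤ n (.inr p)) :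
    Gf rS rR (moveNode n (.inr p) (.inr p')) * rR p * ((n (.inr p') : ℝ) + 1)
      = Gf rS rR n * (n (.inr p) : ℝ) * rR p' := by
  have hab : (Sum.inr p : Fin I ⊕ Fin I × Fin I) ≠ .inr p' := by simp [hpp]
  rw [Gf_move _ _ _ _ _ hab, Gf_base _ _ n _ _ hab]
  obtain ⟨t, ht⟩ : ∃ t, n (.inr p) = t + 1 := ⟨n (.inr p) - 1, by omega⟩
  simp only [gco, ht]
  have h1 : ((Nat.factorial t : ℕ) : ℝ) ≠ 0 := Nat.cast_ne_zero.2 (Nat.factorial_ne_zero _)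
  have h2 : ((Nat.factorial (n (.inr p')) : ℕ) : ℝ) ≠ 0 := Nat.cast_ne_zero.2 (Nat.factorial_ne_zero _)
  rw [Nat.factorial_succ, Nat.factorial_succ]
  push_cast
  field_simp
  ring

end GF

/-- Transition rates of the finite-capacity bike-sharing network with generalized
blocking-and-rerouting matrices `W`. -/
noncomputable def bikeRate (I : ℕ) (μS : Fin I → ℝ) (μRt : Fin I × Fin I → ℝ)
    (q : Fin I → Fin I → ℝ) (cs : Fin I → ℕ)
    (W : Fin I → ((Fin I ⊕ Fin I × Fin I) → ℕ) → Fin I → Fin I → ℝ)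
    (n n' : (Fin I ⊕ Fin I × Fin I) → ℕ) : ℝ :=
  -- a user takes a bike at station `i` and rides towards station `j`
  (∑ i, ∑ j, if n' = moveNode n (.inl i) (.inr (i, j)) ∧ 0 < n (.inl i)
    then μS i * q i j else 0)
  -- a rider on route `[ij]` returns the bike at the non-saturated station `j`
  + (∑ i, ∑ j, if n' = moveNode n (.inr (i, j)) (.inl j) ∧ n (.inl j) < cs j
      then μRt (i, j) * n (.inr (i, j)) else 0)
  -- a rider on route `[ij]` is blocked at the saturated station `j` and rerouted to `[jk]`
  + (∑ i, ∑ j, ∑ k, if n' = moveNode n (.inr (i, j)) (.inr (j, k))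
        ∧ n (.inl j) = cs j ∧ 0 < n (.inr (i, j))
      then μRt (i, j) * n (.inr (i, j))
        * W j (Function.update n (.inr (i, j)) (n (.inr (i, j)) - 1)) i k else 0)

/-- Proposition 5.3 of the paper: product-form stationarity of the finite-capacity
bike-sharing network with general blocking-and-rerouting matrices `W^{(j)}(m)`
satisfying `ν_j q_{jk} = ∑_{i≠j} ν_i q_{ij} w^{(j)}_{ik}(m)`. -/
theorem bike_sharing_rerouting_product_form
    (I : ℕ) (hI : 1 ≤ I) (M : ℕ) (hM : 1 ≤ M)
    -- routes: off-diagonal pairs, containing the support of `q`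
    (R : Finset (Fin I × Fin I)) (hRd : ∀ p ∈ R, p.1 ≠ p.2)
    -- irreducible stochastic routing statistics `q` with invariant distribution `ν`
    (q : Fin I → Fin I → ℝ)
    (hq0 : ∀ i j, 0 ≤ q i j) (hqd : ∀ i, q i i = 0)
    (hqrow : ∀ i, ∑ j, q i j = 1)
    (hRq : ∀ i j, q i j ≠ 0 → (i, j) ∈ R)
    (hirr : ∀ i j, ∃ k : ℕ, 0 < finMatPow q k i j)
    (ν : Fin I → ℝ) (hν0 : ∀ j, 0 ≤ ν j) (hνsum : ∑ j, ν j = 1)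
    (hνinv : ∀ j, ∑ i, ν i * q i j = ν j)
    -- positive service rates and finite station capacities
    (μS : Fin I → ℝ) (hμS : ∀ j, 0 < μS j)
    (μRt : Fin I × Fin I → ℝ) (hμRt : ∀ p ∈ R, 0 < μRt p)
    (cs : Fin I → ℕ)
    -- state spaces with `M` and `M-1` bikes
    (S : Set ((Fin I ⊕ Fin I × Fin I) → ℕ))
    (hS : S = {n | ((∑ j, n (.inl j)) + ∑ p, n (.inr p)) = M
      ∧ (∀ j, n (.inl j) ≤ cs j) ∧ ∀ p, p ∉ R → n (.inr p) = 0})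
    (S' : Set ((Fin I ⊕ Fin I × Fin I) → ℕ))
    (hS' : S' = {n | ((∑ j, n (.inl j)) + ∑ p, n (.inr p)) = M - 1
      ∧ (∀ j, n (.inl j) ≤ cs j) ∧ ∀ p, p ∉ R → n (.inr p) = 0})
    -- the rerouting matrices `W^{(j)}(m)`, stochastic on `𝒥₁ \ {j}`
    (W : Fin I → ((Fin I ⊕ Fin I × Fin I) → ℕ) → Fin I → Fin I → ℝ)
    (hW0 : ∀ j m i k, 0 ≤ W j m i k)
    (hWrow : ∀ j, ∀ m ∈ S', ∀ i, i ≠ j →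
      ∑ k ∈ Finset.univ.filter (fun k => k ≠ j), W j m i k = 1)
    -- the compatibility equations (5.3) of the paper
    (hWinv : ∀ j, ∀ m ∈ S', ∀ k, k ≠ j →
      ν j * q j k = ∑ i ∈ Finset.univ.filter (fun i => i ≠ j), ν i * q i j * W j m i k)
    -- utilizations and the product-form distribution `π`
    (rS : Fin I → ℝ) (hrS : ∀ j, rS j = ν j / (2 * μS j))
    (rR : Fin I × Fin I → ℝ) (hrR : ∀ p ∈ R, rR p = ν p.1 * q p.1 p.2 / (2 * μRt p))
    (Z : ℝ)
    (hZ : Z = ∑' n : (Fin I ⊕ Fin I × Fin I) → ℕ, if n ∈ S then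
      (∏ j, rS j ^ n (.inl j)) * ∏ p, rR p ^ n (.inr p) / (Nat.factorial (n (.inr p)))
      else 0)
    (π : ((Fin I ⊕ Fin I × Fin I) → ℕ) → ℝ)
    (hπ : ∀ n, π n = ((∏ j, rS j ^ n (.inl j))
      * ∏ p, rR p ^ n (.inr p) / (Nat.factorial (n (.inr p)))) / Z) :
    -- global balance equations: `π` is a stationary distribution of the process
    ∀ n ∈ S,
      (∑' n' : (Fin I ⊕ Fin I × Fin I) → ℕ, if n' ∈ S ∧ n' ≠ n
        then π n' * bikeRate I μS μRt q cs W n' n else 0)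
      = π n * ∑' n' : (Fin I ⊕ Fin I × Fin I) → ℕ, if n' ∈ S ∧ n' ≠ n
          then bikeRate I μS μRt q cs W n n' else 0 := by
  

  intro n hn
  -- membership characterizations
  have hSmem : ∀ m : (Fin I ⊕ Fin I × Fin I) → ℕ, m ∈ S ↔
      ((∑ c, m c) = M ∧ (∀ j, m (.inl j) ≤ cs j) ∧ ∀ p, p ∉ R → m (.inr p) = 0) := by
    intro m
    rw [hS, Set.mem_setOf_eq, Fintype.sum_sum_type]
  have hS'mem : ∀ m : (Fin I ⊕ Fin I × Fin I) → ℕ, m ∈ S' ↔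
      ((∑ c, m c) = M - 1 ∧ (∀ j, m (.inl j) ≤ cs j) ∧ ∀ p, p ∉ R → m (.inr p) = 0) := by
    intro m
    rw [hS', Set.mem_setOf_eq, Fintype.sum_sum_type]
  have hπG : ∀ m, π m = Gf rS rR m / Z := fun m => by rw [hπ m, ← Gf_eq rS rR m]
  have hνpos : ∀ j, 0 < ν j := nu_pos q ν hq0 hirr hν0 hνsum hνinv
  obtain ⟨hnsum, hncap, hnsupp⟩ := (hSmem n).1 hn
  have hRy : ∀ p : Fin I × Fin I, 0 < n (.inr p) → p ∈ R := fun p hp => by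
    by_contra h; rw [hnsupp p h] at hp; exact lt_irrefl 0 hp
  -- the finite support set
  set F : Finset ((Fin I ⊕ Fin I × Fin I) → ℕ) :=
    Finset.image
      (fun ab : (Fin I ⊕ Fin I × Fin I) × (Fin I ⊕ Fin I × Fin I) => moveNode n ab.1 ab.2)
      Finset.univ with hF
  have memF : ∀ a b, moveNode n a b ∈ F :=
    fun a b => Finset.mem_image.2 ⟨(a, b), mem_univ _, rfl⟩
  have iteInst : ∀ (c : Prop) (i1 i2 : Decidable c) (x y : ℝ),
      @ite ℝ c i1 x y = @ite ℝ c i2 x y := fun c i1 i2 x y => by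
    rw [Subsingleton.elim i1 i2]
  -- the key structural lemma about transitions into `n`
  have key : ∀ (n' : (Fin I ⊕ Fin I × Fin I) → ℕ) (a b : Fin I ⊕ Fin I × Fin I),
      n' ∈ S → n' ≠ n → n = moveNode n' a b →
      a ≠ b ∧ 0 < n' a ∧ n' = moveNode n b a ∧ 0 < n b := by
    intro n' a b hS1 hne heq
    obtain ⟨hsn', _, _⟩ := (hSmem n').1 hS1
    have hab : a ≠ b := by
      rintro rfl
      rcases Nat.eq_zero_or_pos (n' a) with h0 | hpos
      · exact hne (by rw [heq, moveNode_self_zero n' a h0])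
      · have h2 := sum_moveNode_self n' a hpos
        have h4 : ∑ c, n c = ∑ c, moveNode n' a a c := by rw [heq]
        omega
    have ha : 0 < n' a := by
      rcases Nat.eq_zero_or_pos (n' a) with h0 | hpos
      · exfalso
        have h4 : ∑ c, n c = ∑ c, moveNode n' a b c := by rw [heq]
        rw [sum_moveNode_zero n' a b hab h0] at h4
        omega
      · exact hpos
    refine ⟨hab, ha, ?_, ?_⟩
    · rw [heq, moveNode_invol n' a b hab ha]
    · rw [heq, moveNode_apply_snd _ _ _ hab]; omega
  -- support lemmas for the two tsums
  have hsupL : ∀ n', n' ∉ F →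
      (if n' ∈ S ∧ n' ≠ n then π n' * bikeRate I μS μRt q cs W n' n else 0) = 0 := by
    intro n' hnF
    by_cases hc : n' ∈ S ∧ n' ≠ n
    · rw [if_pos hc]
      have hb : bikeRate I μS μRt q cs W n' n = 0 := by
        have hz : ∀ (a b : Fin I ⊕ Fin I × Fin I), n = moveNode n' a b → False := by
          intro a b heq
          obtain ⟨_, _, h3, _⟩ := key n' a b hc.1 hc.2 heq
          rw [h3] at hnF
          exact hnF (memF _ _)
        simp only [bikeRate]
        have z1 : (∑ i, ∑ j, if n = moveNode n' (.inl i) (.inr (i, j)) ∧ 0 < n' (.inl i)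
            then μS i * q i j else 0) = 0 :=
          Finset.sum_eq_zero fun i _ => Finset.sum_eq_zero fun j _ => by
            rw [if_neg]; rintro ⟨h1, _⟩; exact hz _ _ h1
        have z2 : (∑ i, ∑ j, if n = moveNode n' (.inr (i, j)) (.inl j) ∧ n' (.inl j) < cs j
            then μRt (i, j) * (n' (.inr (i, j)) : ℝ) else 0) = 0 :=
          Finset.sum_eq_zero fun i _ => Finset.sum_eq_zero fun j _ => by
            rw [if_neg]; rintro ⟨h1, _⟩; exact hz _ _ h1
        have z3 : (∑ i, ∑ j, ∑ k, if n = moveNode n' (.inr (i, j)) (.inr (j, k))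
              ∧ n' (.inl j) = cs j ∧ 0 < n' (.inr (i, j))
            then μRt (i, j) * (n' (.inr (i, j)) : ℝ)
              * W j (Function.update n' (.inr (i, j)) (n' (.inr (i, j)) - 1)) i k else 0) = 0 :=
          Finset.sum_eq_zero fun i _ => Finset.sum_eq_zero fun j _ =>
            Finset.sum_eq_zero fun k _ => by
              rw [if_neg]; rintro ⟨h1, _⟩; exact hz _ _ h1
        rw [z1, z2, z3]; norm_num
      rw [hb, mul_zero]
    · rw [if_neg hc]
  have hsupR : ∀ n', n' ∉ F →
      (if n' ∈ S ∧ n' ≠ n then bikeRate I μS μRt q cs W n n' else 0) = 0 := by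
    intro n' hnF
    by_cases hc : n' ∈ S ∧ n' ≠ n
    · rw [if_pos hc]
      have hz : ∀ (a b : Fin I ⊕ Fin I × Fin I), n' = moveNode n a b → False := by
        intro a b heq; rw [heq] at hnF; exact hnF (memF _ _)
      simp only [bikeRate]
      have z1 : (∑ i, ∑ j, if n' = moveNode n (.inl i) (.inr (i, j)) ∧ 0 < n (.inl i)
          then μS i * q i j else 0) = 0 :=
        Finset.sum_eq_zero fun i _ => Finset.sum_eq_zero fun j _ => by
          rw [if_neg]; rintro ⟨h1, _⟩; exact hz _ _ h1
      have z2 : (∑ i, ∑ j, if n' = moveNode n (.inr (i, j)) (.inl j) ∧ n (.inl j) < cs j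
          then μRt (i, j) * (n (.inr (i, j)) : ℝ) else 0) = 0 :=
        Finset.sum_eq_zero fun i _ => Finset.sum_eq_zero fun j _ => by
          rw [if_neg]; rintro ⟨h1, _⟩; exact hz _ _ h1
      have z3 : (∑ i, ∑ j, ∑ k, if n' = moveNode n (.inr (i, j)) (.inr (j, k))
            ∧ n (.inl j) = cs j ∧ 0 < n (.inr (i, j))
          then μRt (i, j) * (n (.inr (i, j)) : ℝ)
            * W j (Function.update n (.inr (i, j)) (n (.inr (i, j)) - 1)) i k else 0) = 0 :=
        Finset.sum_eq_zero fun i _ => Finset.sum_eq_zero fun j _ =>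
          Finset.sum_eq_zero fun k _ => by
            rw [if_neg]; rintro ⟨h1, _⟩; exact hz _ _ h1
      rw [z1, z2, z3]; norm_num
    · rw [if_neg hc]
  -- collapse lemmas
  have collapse_in : ∀ (a b : Fin I ⊕ Fin I × Fin I) (P : ((Fin I ⊕ Fin I × Fin I) → ℕ) → Prop)
      (g : ((Fin I ⊕ Fin I × Fin I) → ℕ) → ℝ),
      (∑ n' ∈ F, if (n' ∈ S ∧ n' ≠ n) ∧ (n = moveNode n' a b ∧ P n') then g n' else 0)
      = if a ≠ b ∧ 0 < n b ∧ moveNode n b a ∈ S ∧ P (moveNode n b a)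
          then g (moveNode n b a) else 0 := by
    intro a b P g
    by_cases h : a ≠ b ∧ 0 < n b ∧ moveNode n b a ∈ S ∧ P (moveNode n b a)
    · rw [if_pos h]
      obtain ⟨hab, hb, hmem0, hP⟩ := h
      rw [Finset.sum_eq_single (moveNode n b a)]
      · rw [if_pos]
        exact ⟨⟨hmem0, moveNode_ne n b a hab.symm hb⟩,
          (moveNode_invol n b a hab.symm hb).symm, hP⟩
      · intro n' _ hne
        rw [if_neg]
        rintro ⟨⟨hS1, hne1⟩, heq, hP1⟩
        obtain ⟨_, _, h3, _⟩ := key n' a b hS1 hne1 heq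
        exact hne h3
      · intro hFm
        exact absurd (memF b a) hFm
    · rw [if_neg h]
      refine Finset.sum_eq_zero fun n' _ => ?_
      rw [if_neg]
      rintro ⟨⟨hS1, hne1⟩, heq, hP1⟩
      obtain ⟨hab, ha, h3, hb⟩ := key n' a b hS1 hne1 heq
      refine h ⟨hab, hb, ?_, ?_⟩ <;> rw [← h3] <;> assumption
  have collapse_out : ∀ (a b : Fin I ⊕ Fin I × Fin I) (P : Prop) (v : ℝ),
      (∑ n' ∈ F, if (n' ∈ S ∧ n' ≠ n) ∧ (n' = moveNode n a b ∧ P) then v else 0)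
      = if moveNode n a b ∈ S ∧ moveNode n a b ≠ n ∧ P then v else 0 := by
    intro a b P v
    rw [Finset.sum_eq_single (moveNode n a b)]
    · by_cases h : moveNode n a b ∈ S ∧ moveNode n a b ≠ n ∧ P
      · rw [if_pos ⟨⟨h.1, h.2.1⟩, rfl, h.2.2⟩, if_pos h]
      · rw [if_neg, if_neg h]
        rintro ⟨⟨h1, h2⟩, _, h3⟩
        exact h ⟨h1, h2, h3⟩
    · intro n' _ hne
      rw [if_neg]
      rintro ⟨_, heq, _⟩
      exact hne heq
    · intro hFm
      exact absurd (memF a b) hFm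
  -- expansion of the LHS rate into three indexed families
  have expandL : ∀ n' : (Fin I ⊕ Fin I × Fin I) → ℕ,
      (if n' ∈ S ∧ n' ≠ n then π n' * bikeRate I μS μRt q cs W n' n else 0)
      = (∑ i, ∑ j, if (n' ∈ S ∧ n' ≠ n) ∧ (n = moveNode n' (.inl i) (.inr (i, j)) ∧ 0 < n' (.inl i))
          then π n' * (μS i * q i j) else 0)
        + (∑ i, ∑ j, if (n' ∈ S ∧ n' ≠ n) ∧ (n = moveNode n' (.inr (i, j)) (.inl j) ∧ n' (.inl j) < cs j)
            then π n' * (μRt (i, j) * (n' (.inr (i, j)) : ℝ)) else 0)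
        + (∑ i, ∑ j, ∑ k, if (n' ∈ S ∧ n' ≠ n) ∧ (n = moveNode n' (.inr (i, j)) (.inr (j, k))
              ∧ n' (.inl j) = cs j ∧ 0 < n' (.inr (i, j)))
            then π n' * (μRt (i, j) * (n' (.inr (i, j)) : ℝ)
              * W j (Function.update n' (.inr (i, j)) (n' (.inr (i, j)) - 1)) i k) else 0) := by
    intro n'
    by_cases h : n' ∈ S ∧ n' ≠ n
    · rw [if_pos h]
      simp only [bikeRate, eq_true h, true_and, mul_add, Finset.mul_sum, mul_ite, mul_zero]
    · rw [if_neg h]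
      simp only [eq_false h, false_and, if_false, Finset.sum_const_zero, add_zero]
  have expandR : ∀ n' : (Fin I ⊕ Fin I × Fin I) → ℕ,
      (if n' ∈ S ∧ n' ≠ n then bikeRate I μS μRt q cs W n n' else 0)
      = (∑ i, ∑ j, if (n' ∈ S ∧ n' ≠ n) ∧ (n' = moveNode n (.inl i) (.inr (i, j)) ∧ 0 < n (.inl i))
          then μS i * q i j else 0)
        + (∑ i, ∑ j, if (n' ∈ S ∧ n' ≠ n) ∧ (n' = moveNode n (.inr (i, j)) (.inl j) ∧ n (.inl j) < cs j)
            then μRt (i, j) * (n (.inr (i, j)) : ℝ) else 0)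
        + (∑ i, ∑ j, ∑ k, if (n' ∈ S ∧ n' ≠ n) ∧ (n' = moveNode n (.inr (i, j)) (.inr (j, k))
              ∧ n (.inl j) = cs j ∧ 0 < n (.inr (i, j)))
            then μRt (i, j) * (n (.inr (i, j)) : ℝ)
              * W j (Function.update n (.inr (i, j)) (n (.inr (i, j)) - 1)) i k else 0) := by
    intro n'
    by_cases h : n' ∈ S ∧ n' ≠ n
    · rw [if_pos h]
      simp only [bikeRate, eq_true h, true_and]
    · rw [if_neg h]
      simp only [eq_false h, false_and, if_false, Finset.sum_const_zero, add_zero]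
  -- collapsed form of the LHS
  have hL : (∑' n' : (Fin I ⊕ Fin I × Fin I) → ℕ, if n' ∈ S ∧ n' ≠ n
        then π n' * bikeRate I μS μRt q cs W n' n else 0)
      = (∑ i, ∑ j, if (Sum.inl i : Fin I ⊕ Fin I × Fin I) ≠ .inr (i, j)
            ∧ 0 < n (.inr (i, j)) ∧ moveNode n (.inr (i, j)) (.inl i) ∈ S
            ∧ 0 < (moveNode n (.inr (i, j)) (.inl i)) (.inl i)
          then π (moveNode n (.inr (i, j)) (.inl i)) * (μS i * q i j) else 0)
      + (∑ i, ∑ j, if (Sum.inr (i, j) : Fin I ⊕ Fin I × Fin I) ≠ .inl j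
            ∧ 0 < n (.inl j) ∧ moveNode n (.inl j) (.inr (i, j)) ∈ S
            ∧ (moveNode n (.inl j) (.inr (i, j))) (.inl j) < cs j
          then π (moveNode n (.inl j) (.inr (i, j)))
            * (μRt (i, j) * ((moveNode n (.inl j) (.inr (i, j))) (.inr (i, j)) : ℝ)) else 0)
      + (∑ i, ∑ j, ∑ k, if (Sum.inr (i, j) : Fin I ⊕ Fin I × Fin I) ≠ .inr (j, k)
            ∧ 0 < n (.inr (j, k)) ∧ moveNode n (.inr (j, k)) (.inr (i, j)) ∈ S
            ∧ ((moveNode n (.inr (j, k)) (.inr (i, j))) (.inl j) = cs j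
              ∧ 0 < (moveNode n (.inr (j, k)) (.inr (i, j))) (.inr (i, j)))
          then π (moveNode n (.inr (j, k)) (.inr (i, j)))
            * (μRt (i, j) * ((moveNode n (.inr (j, k)) (.inr (i, j))) (.inr (i, j)) : ℝ)
              * W j (Function.update (moveNode n (.inr (j, k)) (.inr (i, j))) (.inr (i, j))
                  ((moveNode n (.inr (j, k)) (.inr (i, j))) (.inr (i, j)) - 1)) i k) else 0) := by
    rw [tsum_eq_sum hsupL]
    calc (∑ n' ∈ F, if n' ∈ S ∧ n' ≠ n then π n' * bikeRate I μS μRt q cs W n' n else 0)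
        = ∑ n' ∈ F,
          ((∑ i, ∑ j, if (n' ∈ S ∧ n' ≠ n) ∧ (n = moveNode n' (.inl i) (.inr (i, j)) ∧ 0 < n' (.inl i))
              then π n' * (μS i * q i j) else 0)
          + (∑ i, ∑ j, if (n' ∈ S ∧ n' ≠ n) ∧ (n = moveNode n' (.inr (i, j)) (.inl j) ∧ n' (.inl j) < cs j)
              then π n' * (μRt (i, j) * (n' (.inr (i, j)) : ℝ)) else 0)
          + (∑ i, ∑ j, ∑ k, if (n' ∈ S ∧ n' ≠ n) ∧ (n = moveNode n' (.inr (i, j)) (.inr (j, k))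
                ∧ n' (.inl j) = cs j ∧ 0 < n' (.inr (i, j)))
              then π n' * (μRt (i, j) * (n' (.inr (i, j)) : ℝ)
                * W j (Function.update n' (.inr (i, j)) (n' (.inr (i, j)) - 1)) i k) else 0)) :=
          Finset.sum_congr rfl fun n' _ => expandL n'
      _ = _ := by
          rw [Finset.sum_add_distrib, Finset.sum_add_distrib]
          congr 1
          · congr 1
            · rw [Finset.sum_comm]
              refine Finset.sum_congr rfl fun i _ => ?_
              rw [Finset.sum_comm]
              refine Finset.sum_congr rfl fun j _ => ?_
              exact Eq.trans (Finset.sum_congr rfl fun x _ => iteInst _ _ _ _ _)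
                ((collapse_in (.inl i) (.inr (i, j)) (fun n' => 0 < n' (.inl i))
                  (fun n' => π n' * (μS i * q i j))).trans (iteInst _ _ _ _ _))
            · rw [Finset.sum_comm]
              refine Finset.sum_congr rfl fun i _ => ?_
              rw [Finset.sum_comm]
              refine Finset.sum_congr rfl fun j _ => ?_
              exact Eq.trans (Finset.sum_congr rfl fun x _ => iteInst _ _ _ _ _)
                ((collapse_in (.inr (i, j)) (.inl j) (fun n' => n' (.inl j) < cs j)
                  (fun n' => π n' * (μRt (i, j) * (n' (.inr (i, j)) : ℝ)))).trans
                  (iteInst _ _ _ _ _))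
          · rw [Finset.sum_comm]
            refine Finset.sum_congr rfl fun i _ => ?_
            rw [Finset.sum_comm]
            refine Finset.sum_congr rfl fun j _ => ?_
            rw [Finset.sum_comm]
            refine Finset.sum_congr rfl fun k _ => ?_
            exact Eq.trans (Finset.sum_congr rfl fun x _ => iteInst _ _ _ _ _)
              ((collapse_in (.inr (i, j)) (.inr (j, k))
                (fun n' => n' (.inl j) = cs j ∧ 0 < n' (.inr (i, j)))
                (fun n' => π n' * (μRt (i, j) * (n' (.inr (i, j)) : ℝ)
                  * W j (Function.update n' (.inr (i, j)) (n' (.inr (i, j)) - 1)) i k))).trans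
                (iteInst _ _ _ _ _))
  -- collapsed form of the RHS
  have hR : (∑' n' : (Fin I ⊕ Fin I × Fin I) → ℕ, if n' ∈ S ∧ n' ≠ n
        then bikeRate I μS μRt q cs W n n' else 0)
      = (∑ i, ∑ j, if moveNode n (.inl i) (.inr (i, j)) ∈ S
            ∧ moveNode n (.inl i) (.inr (i, j)) ≠ n ∧ 0 < n (.inl i)
          then μS i * q i j else 0)
      + (∑ i, ∑ j, if moveNode n (.inr (i, j)) (.inl j) ∈ S
            ∧ moveNode n (.inr (i, j)) (.inl j) ≠ n ∧ n (.inl j) < cs j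
          then μRt (i, j) * (n (.inr (i, j)) : ℝ) else 0)
      + (∑ i, ∑ j, ∑ k, if moveNode n (.inr (i, j)) (.inr (j, k)) ∈ S
            ∧ moveNode n (.inr (i, j)) (.inr (j, k)) ≠ n
            ∧ (n (.inl j) = cs j ∧ 0 < n (.inr (i, j)))
          then μRt (i, j) * (n (.inr (i, j)) : ℝ)
            * W j (Function.update n (.inr (i, j)) (n (.inr (i, j)) - 1)) i k else 0) := by
    rw [tsum_eq_sum hsupR]
    calc (∑ n' ∈ F, if n' ∈ S ∧ n' ≠ n then bikeRate I μS μRt q cs W n n' else 0)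
        = ∑ n' ∈ F,
          ((∑ i, ∑ j, if (n' ∈ S ∧ n' ≠ n) ∧ (n' = moveNode n (.inl i) (.inr (i, j)) ∧ 0 < n (.inl i))
              then μS i * q i j else 0)
          + (∑ i, ∑ j, if (n' ∈ S ∧ n' ≠ n) ∧ (n' = moveNode n (.inr (i, j)) (.inl j) ∧ n (.inl j) < cs j)
              then μRt (i, j) * (n (.inr (i, j)) : ℝ) else 0)
          + (∑ i, ∑ j, ∑ k, if (n' ∈ S ∧ n' ≠ n) ∧ (n' = moveNode n (.inr (i, j)) (.inr (j, k))
                ∧ n (.inl j) = cs j ∧ 0 < n (.inr (i, j)))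
              then μRt (i, j) * (n (.inr (i, j)) : ℝ)
                * W j (Function.update n (.inr (i, j)) (n (.inr (i, j)) - 1)) i k else 0)) :=
          Finset.sum_congr rfl fun n' _ => expandR n'
      _ = _ := by
          rw [Finset.sum_add_distrib, Finset.sum_add_distrib]
          congr 1
          · congr 1
            · rw [Finset.sum_comm]
              refine Finset.sum_congr rfl fun i _ => ?_
              rw [Finset.sum_comm]
              refine Finset.sum_congr rfl fun j _ => ?_
              exact Eq.trans (Finset.sum_congr rfl fun x _ => iteInst _ _ _ _ _)
                ((collapse_out (.inl i) (.inr (i, j)) (0 < n (.inl i))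
                  (μS i * q i j)).trans (iteInst _ _ _ _ _))
            · rw [Finset.sum_comm]
              refine Finset.sum_congr rfl fun i _ => ?_
              rw [Finset.sum_comm]
              refine Finset.sum_congr rfl fun j _ => ?_
              exact Eq.trans (Finset.sum_congr rfl fun x _ => iteInst _ _ _ _ _)
                ((collapse_out (.inr (i, j)) (.inl j) (n (.inl j) < cs j)
                  (μRt (i, j) * (n (.inr (i, j)) : ℝ))).trans (iteInst _ _ _ _ _))
          · rw [Finset.sum_comm]
            refine Finset.sum_congr rfl fun i _ => ?_
            rw [Finset.sum_comm]
            refine Finset.sum_congr rfl fun j _ => ?_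
            rw [Finset.sum_comm]
            refine Finset.sum_congr rfl fun k _ => ?_
            exact Eq.trans (Finset.sum_congr rfl fun x _ => iteInst _ _ _ _ _)
              ((collapse_out (.inr (i, j)) (.inr (j, k))
                (n (.inl j) = cs j ∧ 0 < n (.inr (i, j)))
                (μRt (i, j) * (n (.inr (i, j)) : ℝ)
                  * W j (Function.update n (.inr (i, j)) (n (.inr (i, j)) - 1)) i k)).trans
                (iteInst _ _ _ _ _))
  -- characterization of membership of moved states
  have memS_move : ∀ (a b : Fin I ⊕ Fin I × Fin I), a ≠ b →
      (moveNode n a b ∈ S ↔ (0 < n a ∧ (∀ i, b = Sum.inl i → n (Sum.inl i) < cs i)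
        ∧ (∀ p, b = Sum.inr p → p ∈ R))) := by
    intro a b hab
    rw [hSmem]
    constructor
    · rintro ⟨h1, h2, h3⟩
      have ha : 0 < n a := by
        rcases Nat.eq_zero_or_pos (n a) with h0 | hpos
        · exfalso; rw [sum_moveNode_zero n a b hab h0] at h1; omega
        · exact hpos
      refine ⟨ha, ?_, ?_⟩
      · rintro i rfl
        have h4 := h2 i
        rw [moveNode_apply_snd _ _ _ hab] at h4
        omega
      · rintro p rfl
        by_contra hp
        have h4 := h3 p hp
        rw [moveNode_apply_snd _ _ _ hab] at h4
        omega
    · rintro ⟨ha, hb1, hb2⟩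
      refine ⟨by rw [sum_moveNode_pos n a b hab ha]; exact hnsum, ?_, ?_⟩
      · intro j
        rcases eq_or_ne a (Sum.inl j) with rfl | hja
        · rw [moveNode_apply_fst]
          have := hncap j; omega
        · rcases eq_or_ne b (Sum.inl j) with rfl | hjb
          · rw [moveNode_apply_snd _ _ _ hab]
            have := hb1 j rfl; omega
          · rw [moveNode_apply_other n a b _ (Ne.symm hja) (Ne.symm hjb)]
            exact hncap j
      · intro p hp
        rcases eq_or_ne a (Sum.inr p) with rfl | hpa
        · rw [moveNode_apply_fst]
          have := hnsupp p hp; omega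
        · rcases eq_or_ne b (Sum.inr p) with rfl | hpb
          · exact absurd (hb2 p rfl) hp
          · rw [moveNode_apply_other n a b _ (Ne.symm hpa) (Ne.symm hpb)]
            exact hnsupp p hp
  -- updated states with one fewer rider live in S'
  have hupdS' : ∀ p : Fin I × Fin I, 0 < n (.inr p) →
      Function.update n (.inr p) (n (.inr p) - 1) ∈ S' := by
    intro p hp
    rw [hS'mem]
    refine ⟨?_, ?_, ?_⟩
    · rw [Finset.sum_update_of_mem (mem_univ _), Finset.sdiff_singleton_eq_erase]
      have h3 : ∑ c, n c = n (.inr p) + ∑ c ∈ univ.erase (Sum.inr p), n c :=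
        (Finset.add_sum_erase _ _ (mem_univ _)).symm
      omega
    · intro j'
      rw [Function.update_of_ne (by simp)]
      exact hncap j'
    · intro p' hp'
      rcases eq_or_ne (Sum.inr p' : Fin I ⊕ Fin I × Fin I) (Sum.inr p) with h | h
      · obtain rfl := Sum.inr.inj h
        exact absurd (hRy _ hp) hp'
      · rw [Function.update_of_ne h]
        exact hnsupp p' hp'
  -- vanishing of G on states charging a null route
  have Gn0 : ∀ p : Fin I × Fin I, p ∈ R → ν p.1 * q p.1 p.2 = 0 → 1 ≤ n (.inr p) →
      Gf rS rR n = 0 := fun p hp h0 hy =>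
    Gf_zero rS rR n p (by rw [hrR _ hp, h0, zero_div]) hy
  -- the three balance identities
  have star1 : ∀ i j, (i, j) ∈ R → 1 ≤ n (.inr (i, j)) →
      Gf rS rR (moveNode n (.inr (i, j)) (.inl i)) * (μS i * q i j)
        = Gf rS rR n * (n (.inr (i, j)) : ℝ) * μRt (i, j) := by
    intro i j hR1 hy
    rcases eq_or_ne (q i j) 0 with hq | hq
    · have h0 : rR (i, j) = 0 := by rw [hrR _ hR1]; simp [hq]
      rw [Gf_zero rS rR n (i, j) h0 hy, hq]; ring
    · have hL1 := Gf_move_rt_st rS rR n (i, j) i hy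
      rw [hrR _ hR1, hrS i] at hL1
      have hμ1 := (hμS i).ne'
      have hμ2 := (hμRt _ hR1).ne'
      have hν := (hνpos i).ne'
      have hν2 := hνpos i
      field_simp at hL1
      apply mul_left_cancel₀ (show (2 * ν i : ℝ) ≠ 0 by positivity)
      linear_combination (2 * ν i) * hL1
  have star2 : ∀ i j, (i, j) ∈ R → 1 ≤ n (.inl j) →
      Gf rS rR (moveNode n (.inl j) (.inr (i, j)))
          * (μRt (i, j) * ((n (.inr (i, j)) : ℝ) + 1)) * ν j
        = Gf rS rR n * (ν i * q i j * μS j) := by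
    intro i j hR1 hx
    have hL2 := Gf_move_st_rt rS rR n j (i, j) hx
    rw [hrR _ hR1, hrS j] at hL2
    have hμ1 := (hμS j).ne'
    have hμ2 := (hμRt _ hR1).ne'
    field_simp at hL2
    linear_combination hL2
  have star3 : ∀ i j k, (i, j) ∈ R → (j, k) ∈ R → (i, j) ≠ (j, k) → 1 ≤ n (.inr (j, k)) →
      Gf rS rR (moveNode n (.inr (j, k)) (.inr (i, j)))
          * (μRt (i, j) * ((n (.inr (i, j)) : ℝ) + 1)) * (ν j * q j k)
        = Gf rS rR n * (n (.inr (j, k)) : ℝ) * μRt (j, k) * (ν i * q i j) := by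
    intro i j k hR1 hR2 hne12 hy
    have hL3 := Gf_move_rt_rt rS rR n (j, k) (i, j) (Ne.symm hne12) hy
    rw [hrR _ hR1, hrR _ hR2] at hL3
    have hμ1 := (hμRt _ hR1).ne'
    have hμ2 := (hμRt _ hR2).ne'
    field_simp at hL3
    linear_combination hL3
  -- evaluation of the pickup-inflow group
  have hB1 : (∑ i, ∑ j, if (Sum.inl i : Fin I ⊕ Fin I × Fin I) ≠ .inr (i, j)
        ∧ 0 < n (.inr (i, j)) ∧ moveNode n (.inr (i, j)) (.inl i) ∈ S
        ∧ 0 < (moveNode n (.inr (i, j)) (.inl i)) (.inl i)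
      then π (moveNode n (.inr (i, j)) (.inl i)) * (μS i * q i j) else 0)
      = ∑ i, ∑ j, if 0 < n (.inr (i, j)) ∧ n (.inl i) < cs i
          then Gf rS rR n * (n (.inr (i, j)) : ℝ) * μRt (i, j) / Z else 0 := by
    refine Finset.sum_congr rfl fun i _ => Finset.sum_congr rfl fun j _ => ?_
    have hne : (Sum.inl i : Fin I ⊕ Fin I × Fin I) ≠ .inr (i, j) := by simp
    have hiff : ((Sum.inl i : Fin I ⊕ Fin I × Fin I) ≠ .inr (i, j)
        ∧ 0 < n (.inr (i, j)) ∧ moveNode n (.inr (i, j)) (.inl i) ∈ S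
        ∧ 0 < (moveNode n (.inr (i, j)) (.inl i)) (.inl i))
        ↔ (0 < n (.inr (i, j)) ∧ n (.inl i) < cs i) := by
      rw [memS_move _ _ (Ne.symm hne)]
      constructor
      · rintro ⟨_, hy, ⟨_, hcap, _⟩, _⟩
        exact ⟨hy, hcap i rfl⟩
      · rintro ⟨hy, hci⟩
        refine ⟨hne, hy, ⟨hy, ?_, ?_⟩, ?_⟩
        · intro i' h'
          obtain rfl := Sum.inl.inj h'
          exact hci
        · intro p h'
          simp at h'
        · rw [moveNode_apply_snd _ _ _ (Ne.symm hne)]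
          omega
    rw [if_congr hiff rfl rfl]
    by_cases h : 0 < n (.inr (i, j)) ∧ n (.inl i) < cs i
    · rw [if_pos h, if_pos h, hπG, div_mul_eq_mul_div, star1 i j (hRy _ h.1) h.1]
    · rw [if_neg h, if_neg h]
  -- evaluation of the return-inflow group
  have hB2 : (∑ i, ∑ j, if (Sum.inr (i, j) : Fin I ⊕ Fin I × Fin I) ≠ .inl j
        ∧ 0 < n (.inl j) ∧ moveNode n (.inl j) (.inr (i, j)) ∈ S
        ∧ (moveNode n (.inl j) (.inr (i, j))) (.inl j) < cs j
      then π (moveNode n (.inl j) (.inr (i, j)))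
        * (μRt (i, j) * ((moveNode n (.inl j) (.inr (i, j))) (.inr (i, j)) : ℝ)) else 0)
      = ∑ x, if 0 < n (.inl x) then Gf rS rR n * μS x / Z else 0 := by
    rw [Finset.sum_comm]
    refine Finset.sum_congr rfl fun j _ => ?_
    have hterm : ∀ i, (if (Sum.inr (i, j) : Fin I ⊕ Fin I × Fin I) ≠ .inl j
          ∧ 0 < n (.inl j) ∧ moveNode n (.inl j) (.inr (i, j)) ∈ S
          ∧ (moveNode n (.inl j) (.inr (i, j))) (.inl j) < cs j
        then π (moveNode n (.inl j) (.inr (i, j)))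
          * (μRt (i, j) * ((moveNode n (.inl j) (.inr (i, j))) (.inr (i, j)) : ℝ)) else 0)
        = (if 0 < n (.inl j) ∧ (i, j) ∈ R
            then π (moveNode n (.inl j) (.inr (i, j)))
              * (μRt (i, j) * ((n (.inr (i, j)) : ℝ) + 1)) else 0) := by
      intro i
      have hab : (Sum.inl j : Fin I ⊕ Fin I × Fin I) ≠ .inr (i, j) := by simp
      have hval : π (moveNode n (.inl j) (.inr (i, j)))
          * (μRt (i, j) * ((moveNode n (.inl j) (.inr (i, j))) (.inr (i, j)) : ℝ))
          = π (moveNode n (.inl j) (.inr (i, j)))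
            * (μRt (i, j) * ((n (.inr (i, j)) : ℝ) + 1)) := by
        rw [moveNode_apply_snd _ _ _ hab]
        push_cast
        ring
      have hiff : ((Sum.inr (i, j) : Fin I ⊕ Fin I × Fin I) ≠ .inl j
          ∧ 0 < n (.inl j) ∧ moveNode n (.inl j) (.inr (i, j)) ∈ S
          ∧ (moveNode n (.inl j) (.inr (i, j))) (.inl j) < cs j)
          ↔ (0 < n (.inl j) ∧ (i, j) ∈ R) := by
        rw [memS_move _ _ hab]
        constructor
        · rintro ⟨_, hx, ⟨_, _, hmem⟩, _⟩
          exact ⟨hx, hmem (i, j) rfl⟩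
        · rintro ⟨hx, hR1⟩
          refine ⟨by simp, hx, ⟨hx, ?_, ?_⟩, ?_⟩
          · intro i' h'
            simp at h'
          · intro p h'
            obtain rfl := Sum.inr.inj h'
            exact hR1
          · rw [moveNode_apply_fst]
            have := hncap j; omega
      exact if_congr hiff hval rfl
    rw [Finset.sum_congr rfl (fun i _ => hterm i)]
    by_cases hx : 0 < n (.inl j)
    · rw [if_pos hx]
      apply mul_left_cancel₀ (hνpos j).ne'
      rw [Finset.mul_sum]
      have hper : ∀ i, ν j * (if 0 < n (.inl j) ∧ (i, j) ∈ R
            then π (moveNode n (.inl j) (.inr (i, j)))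
              * (μRt (i, j) * ((n (.inr (i, j)) : ℝ) + 1)) else 0)
          = ν i * q i j * (Gf rS rR n * μS j / Z) := by
        intro i
        by_cases hR1 : (i, j) ∈ R
        · rw [if_pos ⟨hx, hR1⟩, hπG]
          calc ν j * (Gf rS rR (moveNode n (.inl j) (.inr (i, j))) / Z
                * (μRt (i, j) * ((n (.inr (i, j)) : ℝ) + 1)))
              = (Gf rS rR (moveNode n (.inl j) (.inr (i, j)))
                  * (μRt (i, j) * ((n (.inr (i, j)) : ℝ) + 1)) * ν j) / Z := by ring
            _ = (Gf rS rR n * (ν i * q i j * μS j)) / Z := by rw [star2 i j hR1 hx]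
            _ = ν i * q i j * (Gf rS rR n * μS j / Z) := by ring
        · have hq' : q i j = 0 := by
            by_contra hq
            exact hR1 (hRq i j hq)
          rw [if_neg (fun hc => hR1 hc.2), hq', mul_zero, mul_zero, zero_mul]
      rw [Finset.sum_congr rfl (fun i _ => hper i), ← Finset.sum_mul, hνinv j]
    · rw [if_neg hx]
      exact Finset.sum_eq_zero fun i _ => if_neg (fun hc => hx hc.1)
  -- evaluation of the reroute-inflow group
  have hB3 : (∑ i, ∑ j, ∑ k, if (Sum.inr (i, j) : Fin I ⊕ Fin I × Fin I) ≠ .inr (j, k)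
        ∧ 0 < n (.inr (j, k)) ∧ moveNode n (.inr (j, k)) (.inr (i, j)) ∈ S
        ∧ ((moveNode n (.inr (j, k)) (.inr (i, j))) (.inl j) = cs j
          ∧ 0 < (moveNode n (.inr (j, k)) (.inr (i, j))) (.inr (i, j)))
      then π (moveNode n (.inr (j, k)) (.inr (i, j)))
        * (μRt (i, j) * ((moveNode n (.inr (j, k)) (.inr (i, j))) (.inr (i, j)) : ℝ)
          * W j (Function.update (moveNode n (.inr (j, k)) (.inr (i, j))) (.inr (i, j))
              ((moveNode n (.inr (j, k)) (.inr (i, j))) (.inr (i, j)) - 1)) i k) else 0)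
      = ∑ x, ∑ y, if 0 < n (.inr (x, y)) ∧ n (.inl x) = cs x
          then Gf rS rR n * (n (.inr (x, y)) : ℝ) * μRt (x, y) / Z else 0 := by
    rw [Finset.sum_comm]
    refine Finset.sum_congr rfl fun j _ => ?_
    rw [Finset.sum_comm]
    refine Finset.sum_congr rfl fun k _ => ?_
    by_cases hcond : 0 < n (.inr (j, k)) ∧ n (.inl j) = cs j
    · obtain ⟨hy, hxj⟩ := hcond
      have hRjk : (j, k) ∈ R := hRy _ hy
      have hkj : k ≠ j := fun h => (hRd _ hRjk) (by simp [h])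
      have hm' := hupdS' (j, k) hy
      have hterm : ∀ i, (if (Sum.inr (i, j) : Fin I ⊕ Fin I × Fin I) ≠ .inr (j, k)
            ∧ 0 < n (.inr (j, k)) ∧ moveNode n (.inr (j, k)) (.inr (i, j)) ∈ S
            ∧ ((moveNode n (.inr (j, k)) (.inr (i, j))) (.inl j) = cs j
              ∧ 0 < (moveNode n (.inr (j, k)) (.inr (i, j))) (.inr (i, j)))
          then π (moveNode n (.inr (j, k)) (.inr (i, j)))
            * (μRt (i, j) * ((moveNode n (.inr (j, k)) (.inr (i, j))) (.inr (i, j)) : ℝ)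
              * W j (Function.update (moveNode n (.inr (j, k)) (.inr (i, j))) (.inr (i, j))
                  ((moveNode n (.inr (j, k)) (.inr (i, j))) (.inr (i, j)) - 1)) i k) else 0)
          = (if (i, j) ∈ R ∧ (i, j) ≠ (j, k)
              then π (moveNode n (.inr (j, k)) (.inr (i, j)))
                * (μRt (i, j) * ((n (.inr (i, j)) : ℝ) + 1)
                  * W j (Function.update n (.inr (j, k)) (n (.inr (j, k)) - 1)) i k) else 0) := by
        intro i
        by_cases hC : (i, j) ∈ R ∧ (i, j) ≠ (j, k)
        · obtain ⟨hiR, hne12⟩ := hC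
          have hne' : (Sum.inr (i, j) : Fin I ⊕ Fin I × Fin I) ≠ .inr (j, k) :=
            fun h' => hne12 (Sum.inr.inj h')
          have hupd : Function.update (moveNode n (.inr (j, k)) (.inr (i, j))) (.inr (i, j))
                ((moveNode n (.inr (j, k)) (.inr (i, j))) (.inr (i, j)) - 1)
              = Function.update n (.inr (j, k)) (n (.inr (j, k)) - 1) := by
            funext c
            rcases eq_or_ne c (Sum.inr (i, j)) with rfl | hc1
            · rw [Function.update_self, Function.update_of_ne hne',
                moveNode_apply_snd _ _ _ (Ne.symm hne')]
              omega
            · rw [Function.update_of_ne hc1]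
              rcases eq_or_ne c (Sum.inr (j, k)) with rfl | hc2
              · rw [Function.update_self, moveNode_apply_fst]
              · rw [Function.update_of_ne hc2, moveNode_apply_other _ _ _ _ hc2 hc1]
          have hcondL : (Sum.inr (i, j) : Fin I ⊕ Fin I × Fin I) ≠ .inr (j, k)
              ∧ 0 < n (.inr (j, k)) ∧ moveNode n (.inr (j, k)) (.inr (i, j)) ∈ S
              ∧ ((moveNode n (.inr (j, k)) (.inr (i, j))) (.inl j) = cs j
                ∧ 0 < (moveNode n (.inr (j, k)) (.inr (i, j))) (.inr (i, j))) := by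
            refine ⟨hne', hy, (memS_move _ _ (Ne.symm hne')).2 ⟨hy, ?_, ?_⟩, ?_, ?_⟩
            · intro i' h'; simp at h'
            · intro p h'
              obtain rfl := Sum.inr.inj h'
              exact hiR
            · rw [moveNode_apply_other _ _ _ _ (by simp) (by simp)]
              exact hxj
            · rw [moveNode_apply_snd _ _ _ (Ne.symm hne')]
              omega
          rw [if_pos hcondL, if_pos ⟨hiR, hne12⟩, hupd,
            moveNode_apply_snd _ _ _ (Ne.symm hne')]
          push_cast; ring
        · rw [if_neg hC, if_neg]
          rintro ⟨hne', hy', hmem, hP⟩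
          refine hC ⟨?_, fun h' => hne' (by rw [h'])⟩
          exact ((memS_move _ _ (Ne.symm hne')).1 hmem).2.2 (i, j) rfl
      rw [Finset.sum_congr rfl (fun i _ => hterm i), if_pos ⟨hy, hxj⟩]
      rcases eq_or_ne (ν j * q j k) 0 with hq0' | hqne
      · have hGn : Gf rS rR n = 0 := Gn0 (j, k) hRjk hq0' hy
        rw [hGn, zero_mul, zero_mul, zero_div]
        refine Finset.sum_eq_zero fun i _ => ?_
        by_cases hiR : (i, j) ∈ R ∧ (i, j) ≠ (j, k)
        · rw [if_pos hiR]
          have hij : i ≠ j := fun h => hRd _ hiR.1 (by simp [h])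
          have hterm0 : ∀ i' ∈ Finset.univ.filter (fun i' => i' ≠ j),
              ν i' * q i' j * W j (Function.update n (.inr (j, k)) (n (.inr (j, k)) - 1)) i' k = 0 := by
            refine (Finset.sum_eq_zero_iff_of_nonneg (fun i' _ =>
              mul_nonneg (mul_nonneg (hν0 i') (hq0 i' j)) (hW0 _ _ _ _))).1 ?_
            rw [← hWinv j _ hm' k hkj]
            exact hq0'
          have h0 := hterm0 i (by simp [hij])
          rcases mul_eq_zero.1 h0 with h1 | h2
          · have hrR0 : rR (i, j) = 0 := by rw [hrR _ hiR.1, h1, zero_div]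
            have hne' : (Sum.inr (j, k) : Fin I ⊕ Fin I × Fin I) ≠ .inr (i, j) :=
              fun h' => hiR.2 (Sum.inr.inj h').symm
            have hG3 : Gf rS rR (moveNode n (.inr (j, k)) (.inr (i, j))) = 0 :=
              Gf_zero rS rR _ (i, j) hrR0
                (by rw [moveNode_apply_snd _ _ _ hne']; omega)
            rw [hπG, hG3, zero_div, zero_mul]
          · rw [h2, mul_zero, mul_zero]
        · rw [if_neg hiR]
      · apply mul_left_cancel₀ hqne
        rw [Finset.mul_sum]
        have hper : ∀ i, ν j * q j k * (if (i, j) ∈ R ∧ (i, j) ≠ (j, k)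
              then π (moveNode n (.inr (j, k)) (.inr (i, j)))
                * (μRt (i, j) * ((n (.inr (i, j)) : ℝ) + 1)
                  * W j (Function.update n (.inr (j, k)) (n (.inr (j, k)) - 1)) i k) else 0)
            = ν i * q i j * W j (Function.update n (.inr (j, k)) (n (.inr (j, k)) - 1)) i k
              * (Gf rS rR n * (n (.inr (j, k)) : ℝ) * μRt (j, k) / Z) := by
          intro i
          by_cases hC : (i, j) ∈ R ∧ (i, j) ≠ (j, k)
          · rw [if_pos hC, hπG]
            calc ν j * q j k * (Gf rS rR (moveNode n (.inr (j, k)) (.inr (i, j))) / Z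
                  * (μRt (i, j) * ((n (.inr (i, j)) : ℝ) + 1)
                    * W j (Function.update n (.inr (j, k)) (n (.inr (j, k)) - 1)) i k))
                = (Gf rS rR (moveNode n (.inr (j, k)) (.inr (i, j)))
                    * (μRt (i, j) * ((n (.inr (i, j)) : ℝ) + 1)) * (ν j * q j k))
                  * W j (Function.update n (.inr (j, k)) (n (.inr (j, k)) - 1)) i k / Z := by
                  ring
              _ = (Gf rS rR n * (n (.inr (j, k)) : ℝ) * μRt (j, k) * (ν i * q i j))
                  * W j (Function.update n (.inr (j, k)) (n (.inr (j, k)) - 1)) i k / Z := by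
                  rw [star3 i j k hC.1 hRjk hC.2 hy]
              _ = ν i * q i j * W j (Function.update n (.inr (j, k)) (n (.inr (j, k)) - 1)) i k
                  * (Gf rS rR n * (n (.inr (j, k)) : ℝ) * μRt (j, k) / Z) := by ring
          · have hne12 : (i, j) ≠ (j, k) := by
              intro h'
              rw [Prod.mk.injEq] at h'
              exact hkj h'.2.symm
            have hiR : (i, j) ∉ R := fun hmem => hC ⟨hmem, hne12⟩
            have hq' : q i j = 0 := by
              by_contra hq
              exact hiR (hRq i j hq)
            rw [if_neg hC, hq', mul_zero, mul_zero, zero_mul, zero_mul]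
        rw [Finset.sum_congr rfl (fun i _ => hper i), ← Finset.sum_mul]
        have hWs : (∑ i, ν i * q i j
              * W j (Function.update n (.inr (j, k)) (n (.inr (j, k)) - 1)) i k)
            = ν j * q j k := by
          rw [← Finset.sum_filter_of_ne (p := fun i => i ≠ j)
            (fun x _ hx => by rintro rfl; rw [hqd x] at hx; simp at hx)]
          exact (hWinv j _ hm' k hkj).symm
        rw [hWs]
    · rw [if_neg hcond]
      refine Finset.sum_eq_zero fun i _ => ?_
      rw [if_neg]
      rintro ⟨hne', hy', hmem, hP⟩
      have hxj : (moveNode n (.inr (j, k)) (.inr (i, j))) (.inl j) = n (.inl j) :=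
        moveNode_apply_other _ _ _ _ (by simp) (by simp)
      exact hcond ⟨hy', by rw [hxj] at hP; exact hP.1⟩
  -- evaluation of the pickup-outflow group
  have hO1 : π n * (∑ i, ∑ j, if moveNode n (.inl i) (.inr (i, j)) ∈ S
        ∧ moveNode n (.inl i) (.inr (i, j)) ≠ n ∧ 0 < n (.inl i)
      then μS i * q i j else 0)
      = ∑ x, if 0 < n (.inl x) then Gf rS rR n * μS x / Z else 0 := by
    rw [Finset.mul_sum]
    refine Finset.sum_congr rfl fun i _ => ?_
    rw [Finset.mul_sum]
    by_cases hx : 0 < n (.inl i)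
    · rw [if_pos hx]
      have hper : ∀ j, π n * (if moveNode n (.inl i) (.inr (i, j)) ∈ S
            ∧ moveNode n (.inl i) (.inr (i, j)) ≠ n ∧ 0 < n (.inl i)
          then μS i * q i j else 0) = Gf rS rR n * μS i / Z * q i j := by
        intro j
        have hne : (Sum.inl i : Fin I ⊕ Fin I × Fin I) ≠ .inr (i, j) := by simp
        by_cases hiR : (i, j) ∈ R
        · rw [if_pos ⟨(memS_move _ _ hne).2 ⟨hx, fun i' h' => by simp at h',
            fun p h' => by obtain rfl := Sum.inr.inj h'; exact hiR⟩,
            moveNode_ne _ _ _ hne hx, hx⟩, hπG]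
          ring
        · have hq' : q i j = 0 := by
            by_contra hq
            exact hiR (hRq i j hq)
          rw [hq', mul_zero]
          split_ifs with h'
          · rw [mul_zero, mul_zero]
          · rw [mul_zero]
            rw [mul_zero]
      rw [Finset.sum_congr rfl (fun j _ => hper j), ← Finset.mul_sum, hqrow i, mul_one]
    · rw [if_neg hx]
      refine Finset.sum_eq_zero fun j _ => ?_
      rw [if_neg (fun hc => hx hc.2.2), mul_zero]
  -- evaluation of the return-outflow group
  have hO2 : π n * (∑ i, ∑ j, if moveNode n (.inr (i, j)) (.inl j) ∈ S
        ∧ moveNode n (.inr (i, j)) (.inl j) ≠ n ∧ n (.inl j) < cs j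
      then μRt (i, j) * (n (.inr (i, j)) : ℝ) else 0)
      = ∑ i, ∑ j, if 0 < n (.inr (i, j)) ∧ n (.inl j) < cs j
          then Gf rS rR n * (n (.inr (i, j)) : ℝ) * μRt (i, j) / Z else 0 := by
    rw [Finset.mul_sum]
    refine Finset.sum_congr rfl fun i _ => ?_
    rw [Finset.mul_sum]
    refine Finset.sum_congr rfl fun j _ => ?_
    have hne : (Sum.inr (i, j) : Fin I ⊕ Fin I × Fin I) ≠ .inl j := by simp
    have hiff : (moveNode n (.inr (i, j)) (.inl j) ∈ S
        ∧ moveNode n (.inr (i, j)) (.inl j) ≠ n ∧ n (.inl j) < cs j)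
        ↔ (0 < n (.inr (i, j)) ∧ n (.inl j) < cs j) := by
      rw [memS_move _ _ hne]
      constructor
      · rintro ⟨⟨hy, _, _⟩, _, hxj⟩
        exact ⟨hy, hxj⟩
      · rintro ⟨hy, hxj⟩
        exact ⟨⟨hy, fun i' h' => by obtain rfl := Sum.inl.inj h'; exact hxj,
          fun p h' => by simp at h'⟩, moveNode_ne _ _ _ hne hy, hxj⟩
    rw [if_congr hiff rfl rfl]
    by_cases h : 0 < n (.inr (i, j)) ∧ n (.inl j) < cs j
    · rw [if_pos h, if_pos h, hπG]
      ring
    · rw [if_neg h, if_neg h, mul_zero]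
  -- evaluation of the reroute-outflow group
  have hO3 : π n * (∑ i, ∑ j, ∑ k, if moveNode n (.inr (i, j)) (.inr (j, k)) ∈ S
        ∧ moveNode n (.inr (i, j)) (.inr (j, k)) ≠ n
        ∧ (n (.inl j) = cs j ∧ 0 < n (.inr (i, j)))
      then μRt (i, j) * (n (.inr (i, j)) : ℝ)
        * W j (Function.update n (.inr (i, j)) (n (.inr (i, j)) - 1)) i k else 0)
      = ∑ i, ∑ j, if 0 < n (.inr (i, j)) ∧ n (.inl j) = cs j
          then Gf rS rR n * (n (.inr (i, j)) : ℝ) * μRt (i, j) / Z else 0 := by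
    rw [Finset.mul_sum]
    refine Finset.sum_congr rfl fun i _ => ?_
    rw [Finset.mul_sum]
    refine Finset.sum_congr rfl fun j _ => ?_
    by_cases h : 0 < n (.inr (i, j)) ∧ n (.inl j) = cs j
    · obtain ⟨hy, hxj⟩ := h
      have hiR : (i, j) ∈ R := hRy _ hy
      have hij : i ≠ j := hRd _ hiR
      have hm'' := hupdS' (i, j) hy
      have hne' : ∀ k', (Sum.inr (i, j) : Fin I ⊕ Fin I × Fin I) ≠ .inr (j, k') :=
        fun k' h' => hij (by have := Sum.inr.inj h'; rw [Prod.mk.injEq] at this; exact this.1)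
      rw [if_pos ⟨hy, hxj⟩, Finset.mul_sum]
      have hper : ∀ k, π n * (if moveNode n (.inr (i, j)) (.inr (j, k)) ∈ S
            ∧ moveNode n (.inr (i, j)) (.inr (j, k)) ≠ n
            ∧ (n (.inl j) = cs j ∧ 0 < n (.inr (i, j)))
          then μRt (i, j) * (n (.inr (i, j)) : ℝ)
            * W j (Function.update n (.inr (i, j)) (n (.inr (i, j)) - 1)) i k else 0)
          = Gf rS rR n * (n (.inr (i, j)) : ℝ) * μRt (i, j) / Z
            * (if k ≠ j then W j (Function.update n (.inr (i, j)) (n (.inr (i, j)) - 1)) i k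
                else 0) := by
        intro k
        by_cases hkR : (j, k) ∈ R
        · have hkj : k ≠ j := fun h' => hRd _ hkR (by simp [h'])
          rw [if_pos ⟨(memS_move _ _ (hne' k)).2 ⟨hy, fun i' h' => by simp at h',
            fun p h' => by obtain rfl := Sum.inr.inj h'; exact hkR⟩,
            moveNode_ne _ _ _ (hne' k) hy, hxj, hy⟩, if_pos hkj, hπG]
          ring
        · have hq' : q j k = 0 := by
            by_contra hq
            exact hkR (hRq j k hq)
          have hLz : (if moveNode n (.inr (i, j)) (.inr (j, k)) ∈ S
              ∧ moveNode n (.inr (i, j)) (.inr (j, k)) ≠ n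
              ∧ (n (.inl j) = cs j ∧ 0 < n (.inr (i, j)))
            then μRt (i, j) * (n (.inr (i, j)) : ℝ)
              * W j (Function.update n (.inr (i, j)) (n (.inr (i, j)) - 1)) i k else 0) = 0 := by
            rw [if_neg]
            rintro ⟨hmem, _, _⟩
            exact hkR (((memS_move _ _ (hne' k)).1 hmem).2.2 (j, k) rfl)
          rw [hLz, mul_zero]
          rcases eq_or_ne k j with rfl | hkj
          · rw [if_neg (by simp), mul_zero]
          · rw [if_pos hkj]
            have hterm0 : ∀ i' ∈ Finset.univ.filter (fun i' => i' ≠ j),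
                ν i' * q i' j * W j (Function.update n (.inr (i, j)) (n (.inr (i, j)) - 1)) i' k
                  = 0 := by
              refine (Finset.sum_eq_zero_iff_of_nonneg (fun i' _ =>
                mul_nonneg (mul_nonneg (hν0 i') (hq0 i' j)) (hW0 _ _ _ _))).1 ?_
              rw [← hWinv j _ hm'' k hkj, hq', mul_zero]
            have h0 := hterm0 i (by simp [hij])
            rcases mul_eq_zero.1 h0 with h1 | h2
            · have hGn : Gf rS rR n = 0 := Gn0 (i, j) hiR h1 hy
              rw [hGn]
              simp
            · rw [h2, mul_zero]
      rw [Finset.sum_congr rfl (fun k _ => hper k), ← Finset.mul_sum]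
      have hWone : (∑ k, if k ≠ j
            then W j (Function.update n (.inr (i, j)) (n (.inr (i, j)) - 1)) i k else 0) = 1 := by
        rw [← Finset.sum_filter]
        exact hWrow j _ hm'' i hij
      rw [hWone, mul_one]
    · rw [if_neg h]
      rw [Finset.sum_eq_zero (fun k _ => if_neg
        (fun hc => h ⟨hc.2.2.2, hc.2.2.1⟩)), mul_zero]
  -- the two capacity dichotomies
  have hdich1 : (∑ i, ∑ j, if 0 < n (.inr (i, j)) ∧ n (.inl i) < cs i
        then Gf rS rR n * (n (.inr (i, j)) : ℝ) * μRt (i, j) / Z else 0)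
      + (∑ x, ∑ y, if 0 < n (.inr (x, y)) ∧ n (.inl x) = cs x
          then Gf rS rR n * (n (.inr (x, y)) : ℝ) * μRt (x, y) / Z else 0)
      = ∑ i, ∑ j, if 0 < n (.inr (i, j))
          then Gf rS rR n * (n (.inr (i, j)) : ℝ) * μRt (i, j) / Z else 0 := by
    rw [← Finset.sum_add_distrib]
    refine Finset.sum_congr rfl fun i _ => ?_
    rw [← Finset.sum_add_distrib]
    refine Finset.sum_congr rfl fun j _ => ?_
    have hcap := hncap i
    by_cases hy : 0 < n (.inr (i, j))
    · rcases lt_or_eq_of_le hcap with h' | h'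
      · rw [if_pos ⟨hy, h'⟩, if_neg (fun hc => absurd hc.2 (ne_of_lt h')), if_pos hy, add_zero]
      · rw [if_neg (fun hc => absurd h' (ne_of_lt hc.2)),
          if_pos ⟨hy, h'⟩, if_pos hy, zero_add]
    · rw [if_neg (fun hc => hy hc.1), if_neg (fun hc => hy hc.1), if_neg hy, add_zero]
  have hdich2 : (∑ i, ∑ j, if 0 < n (.inr (i, j)) ∧ n (.inl j) < cs j
        then Gf rS rR n * (n (.inr (i, j)) : ℝ) * μRt (i, j) / Z else 0)
      + (∑ i, ∑ j, if 0 < n (.inr (i, j)) ∧ n (.inl j) = cs j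
          then Gf rS rR n * (n (.inr (i, j)) : ℝ) * μRt (i, j) / Z else 0)
      = ∑ i, ∑ j, if 0 < n (.inr (i, j))
          then Gf rS rR n * (n (.inr (i, j)) : ℝ) * μRt (i, j) / Z else 0 := by
    rw [← Finset.sum_add_distrib]
    refine Finset.sum_congr rfl fun i _ => ?_
    rw [← Finset.sum_add_distrib]
    refine Finset.sum_congr rfl fun j _ => ?_
    have hcap := hncap j
    by_cases hy : 0 < n (.inr (i, j))
    · rcases lt_or_eq_of_le hcap with h' | h'
      · rw [if_pos ⟨hy, h'⟩, if_neg (fun hc => absurd hc.2 (ne_of_lt h')), if_pos hy, add_zero]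
      · rw [if_neg (fun hc => absurd h' (ne_of_lt hc.2)),
          if_pos ⟨hy, h'⟩, if_pos hy, zero_add]
    · rw [if_neg (fun hc => hy hc.1), if_neg (fun hc => hy hc.1), if_neg hy, add_zero]
  -- final assembly
  rw [hL, hR, hB1, hB2, hB3, mul_add, mul_add, hO1, hO2, hO3]
  linarith [hdich1, hdich2]
end

section
/- Let X be a nonnegative random variable with finite third moment and m = E(X). Then E(|X − m|³) ≤ E(X³). -/
open MeasureTheory ProbabilityTheory

lemma key_ptwise (x m : ℝ) (hx : 0 ≤ x) (hm : 0 ≤ m) :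
    |x - m| ^ 3 ≤ x ^ 3 - 3 * m ^ 2 * x + 3 * m ^ 3 := by
  rcases le_total m x with h | h
  · rw [abs_of_nonneg (by linarith)]
    nlinarith [sq_nonneg (x - m), mul_nonneg hm (sq_nonneg (x - m))]
  · rw [abs_of_nonpos (by linarith)]
    nlinarith [sq_nonneg (x - m), sq_nonneg x, mul_nonneg hx (sq_nonneg (x - m)),
      mul_nonneg (mul_nonneg hx hx) hx, mul_nonneg hx (sq_nonneg (m - x))]

/-- For a nonnegative random variable `X` with finite third moment and mean `m`,
the centered third absolute moment is dominated by the third moment: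
`E(|X - m|³) ≤ E(X³)`. -/
theorem centered_third_moment_le
    {Ω : Type*} [MeasurableSpace Ω] (μ : Measure Ω) [IsProbabilityMeasure μ]
    (X : Ω → ℝ) (hX : 0 ≤ᵐ[μ] X)
    (h3 : Integrable (fun ω => X ω ^ 3) μ)
    (hXmeas : AEStronglyMeasurable X μ)
    (m : ℝ) (hm : m = ∫ ω, X ω ∂μ) :
    ∫ ω, |X ω - m| ^ 3 ∂μ ≤ ∫ ω, X ω ^ 3 ∂μ := by
  have hm0 : 0 ≤ m := hm ▸ integral_nonneg_of_ae hX
  have hb : Integrable (fun ω => 1 + X ω ^ 3) μ := (integrable_const 1).add h3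
  have hXint : Integrable X μ := by
    refine hb.mono hXmeas ?_
    filter_upwards [hX] with ω hω
    simp only [Pi.zero_apply] at hω
    have h1 : X ω ≤ 1 + X ω ^ 3 := by nlinarith [sq_nonneg (X ω - 1), sq_nonneg (X ω)]
    have h2 : (0:ℝ) ≤ 1 + X ω ^ 3 := by positivity
    simp only [Real.norm_eq_abs, abs_of_nonneg hω, abs_of_nonneg h2]
    exact h1
  have hcm : Integrable (fun ω => 3 * m ^ 2 * X ω) μ := hXint.const_mul _
  have hg1 : Integrable (fun ω => X ω ^ 3 - 3 * m ^ 2 * X ω) μ := h3.sub hcm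
  have hg : Integrable (fun ω => X ω ^ 3 - 3 * m ^ 2 * X ω + 3 * m ^ 3) μ :=
    hg1.add (integrable_const _)
  have hkey : ∀ᵐ ω ∂μ, |X ω - m| ^ 3 ≤ X ω ^ 3 - 3 * m ^ 2 * X ω + 3 * m ^ 3 := by
    filter_upwards [hX] with ω hω
    simp only [Pi.zero_apply] at hω
    exact key_ptwise (X ω) m hω hm0
  have hfmeas : AEStronglyMeasurable (fun ω => |X ω - m| ^ 3) μ :=
    (continuous_abs.pow 3).comp_aestronglyMeasurable (hXmeas.sub aestronglyMeasurable_const)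
  have hf : Integrable (fun ω => |X ω - m| ^ 3) μ := by
    refine hg.mono hfmeas ?_
    filter_upwards [hkey] with ω hω
    have h0 : (0:ℝ) ≤ |X ω - m| ^ 3 := by positivity
    rw [Real.norm_eq_abs, Real.norm_eq_abs, abs_of_nonneg h0, abs_of_nonneg (le_trans h0 hω)]
    exact hω
  calc ∫ ω, |X ω - m| ^ 3 ∂μ ≤ ∫ ω, (X ω ^ 3 - 3 * m ^ 2 * X ω + 3 * m ^ 3) ∂μ :=
        integral_mono_ae hf hg hkey
    _ = ∫ ω, X ω ^ 3 ∂μ := by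
        rw [integral_add hg1 (integrable_const _), integral_sub h3 hcm,
          MeasureTheory.integral_const_mul, integral_const, ← hm]
        simp [measure_univ]
        ring
end

section
/- Let c ≥ 1 be an integer and 0 < ρ ≤ 1, let X_{ρ,c} be a truncated geometric random variable with parameters ρ and c, and let s_{ρ,c} = Σ_{l∈ℤ} p_{2l} p_{2l+1}/(p_{2l} + p_{2l+1}) where p_n = P(X_{ρ,c} = n) (with summands taken to be 0 when p_{2l} = p_{2l+1} = 0). Then s_{ρ,c} ≥ (ρ/2) (Σ_{l=0}^{c} ρ^l)^{-1}. -/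
open Finset

/-- Lower bound on the Gnedenko quantity `s_{ρ,c}` of the truncated geometric
distribution with parameters `ρ ∈ (0,1]` and `c ≥ 1`, as established in the proof of
Lemma 2.8 of the paper: `s_{ρ,c} ≥ (ρ/2) (∑_{l=0}^{c} ρ^l)⁻¹`. -/
theorem truncated_geometric_gnedenko_lower_bound
    (c : ℕ) (hc : 1 ≤ c) (ρ : ℝ) (hρ0 : 0 < ρ) (hρ1 : ρ ≤ 1)
    (p : ℤ → ℝ)
    (hp : ∀ n : ℤ, p n = if 0 ≤ n ∧ n ≤ (c : ℤ)
      then ρ ^ n.toNat / ∑ h ∈ Finset.range (c + 1), ρ ^ h else 0)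
    (s : ℝ)
    (hs : s = ∑' l : ℤ, p (2 * l) * p (2 * l + 1) / (p (2 * l) + p (2 * l + 1))) :
    ρ / 2 * (∑ l ∈ Finset.range (c + 1), ρ ^ l)⁻¹ ≤ s := by
  set S : ℝ := ∑ l ∈ Finset.range (c + 1), ρ ^ l with hS
  have hSpos : 0 < S := by
    apply Finset.sum_pos (fun i _ => pow_pos hρ0 i)
    exact ⟨0, Finset.mem_range.mpr (Nat.succ_pos c)⟩
  have hpnn : ∀ n : ℤ, 0 ≤ p n := by
    intro n
    rw [hp n]
    split
    · positivity
    · exact le_refl 0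
  set f : ℤ → ℝ := fun l => p (2 * l) * p (2 * l + 1) / (p (2 * l) + p (2 * l + 1)) with hf
  have hfnn : ∀ l : ℤ, 0 ≤ f l := by
    intro l
    apply div_nonneg (mul_nonneg (hpnn _) (hpnn _)) (add_nonneg (hpnn _) (hpnn _))
  have hfin : ∀ l ∉ Finset.Icc (0 : ℤ) c, f l = 0 := by
    intro l hl
    simp only [Finset.mem_Icc, not_and_or, not_le] at hl
    have : p (2 * l) = 0 := by
      rw [hp]
      rw [if_neg]
      rintro ⟨h1, h2⟩
      rcases hl with hl | hl
      · omega
      · omega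
    simp [hf, this]
  have hsum : Summable f := summable_of_ne_finset_zero hfin
  have h0 : f 0 ≤ s := by
    rw [hs]
    exact Summable.le_tsum hsum 0 (fun l _ => hfnn l)
  refine le_trans ?_ h0
  have hp0 : p 0 = 1 / S := by
    rw [hp]; rw [if_pos ⟨le_refl 0, by exact_mod_cast Nat.zero_le c⟩]
    simp
  have hp1 : p 1 = ρ / S := by
    rw [hp]; rw [if_pos ⟨by norm_num, by exact_mod_cast hc⟩]
    simp
  have : f 0 = ρ / (S * (1 + ρ)) := by
    simp only [hf, mul_zero, zero_add, hp0, hp1]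
    field_simp
  rw [this]
  have key : ρ / 2 * S⁻¹ = ρ / (2 * S) := by field_simp
  rw [key]
  apply div_le_div_of_nonneg_left hρ0.le (by positivity) (by nlinarith)
end
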